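/- arXiv:2105.11483 — 15 statements merged into one kernel-verified Lean document; each statement's English description precedes it below -/
import Mathlib

section
/- Let 𝒜 be an abelian category, (𝒯, ℱ) a hereditary torsion pair on 𝒜, and let Σ be the class of morphisms f in 𝒜 with ker f ∈ 𝒯 and coker f ∈ 𝒯. Then a morphism f of ℱ lies in Σ if and only if f is both a monomorphism and an epimorphism in the full subcategory ℱ. -/
open CategoryTheory CategoryTheory.Limits

universe v u

/-- A hereditary torsion pair `(T, F)` on an abelian category: both classes are
replete (closed under isomorphism), `Hom(T, F) = 0`, every object is an extension of
a torsionfree object by a torsion object, and `T` is closed under subobjects. -/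
structure HereditaryTorsionPair {C : Type u} [Category.{v} C] [Abelian C]
    (T F : C → Prop) : Prop where
  replete_T : ∀ {X Y : C}, (X ≅ Y) → T X → T Y
  replete_F : ∀ {X Y : C}, (X ≅ Y) → F X → F Y
  hom_zero : ∀ {X Y : C}, T X → F Y → ∀ f : X ⟶ Y, f = 0
  exists_ses : ∀ M : C, ∃ (A B : C) (i : A ⟶ M) (p : M ⟶ B) (w : i ≫ p = 0),
    T A ∧ F B ∧ (ShortComplex.mk i p w).ShortExact
  hereditary : ∀ {X Y : C} (f : X ⟶ Y), Mono f → T Y → T X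

/-- The torsion class contains every zero object. -/
lemma HereditaryTorsionPair.T_of_isZero {C : Type u} [Category.{v} C] [Abelian C]
    {T F : C → Prop} (htp : HereditaryTorsionPair T F) {Z : C} (hZ : IsZero Z) : T Z := by
  obtain ⟨A, B, i, p, w, hA, hB, hse⟩ := htp.exists_ses Z
  have : Mono i := hse.mono_f
  have hi : i = 0 := hZ.eq_zero_of_tgt i
  have hAZ : IsZero A := IsZero.of_mono_eq_zero i hi
  exact htp.replete_T (hAZ.iso hZ) hA

/-- A morphism `f` between torsionfree objects has torsion kernel and cokernel
(i.e. lies in `Σ`) if and only if it is both a monomorphism and an epimorphism in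
the full subcategory `ℱ` of torsionfree objects. -/
theorem torsionfree_bimorphism_iff_sigma
    {C : Type u} [Category.{v} C] [Abelian C] (T F : C → Prop)
    (htp : HereditaryTorsionPair T F) {X Y : C} (hX : F X) (hY : F Y) (f : X ⟶ Y) :
    (T (kernel f) ∧ T (cokernel f)) ↔
      (Mono (show (⟨X, hX⟩ : ObjectProperty.FullSubcategory F) ⟶ ⟨Y, hY⟩ from ObjectProperty.homMk f) ∧
        Epi (show (⟨X, hX⟩ : ObjectProperty.FullSubcategory F) ⟶ ⟨Y, hY⟩ from ObjectProperty.homMk f)) := by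
  constructor
  · rintro ⟨hK, hQ⟩
    constructor
    · -- mono in ℱ: in fact f is mono in C
      have hι : kernel.ι f = 0 := htp.hom_zero hK hX _
      have : Mono f := Abelian.mono_of_kernel_ι_eq_zero f hι
      constructor
      intro Z g₁ g₂ h
      exact ObjectProperty.hom_ext _ ((cancel_mono f).1 (by simpa using congrArg (fun k => k.hom) h))
    · constructor
      intro Z g₁ g₂ h
      have hz : f ≫ (g₁.hom - g₂.hom) = 0 := by
        have h' : f ≫ g₁.hom = f ≫ g₂.hom := by simpa using congrArg (fun k => k.hom) h
        simp [Preadditive.comp_sub, h']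
      have hd : cokernel.desc f (g₁.hom - g₂.hom) hz = 0 := htp.hom_zero hQ Z.property _
      have : (g₁.hom - g₂.hom : Y ⟶ Z.obj) = cokernel.π f ≫ cokernel.desc f (g₁.hom - g₂.hom) hz := by simp
      rw [hd, comp_zero] at this
      have : g₁ = g₂ := by
        have := sub_eq_zero.mp this
        exact ObjectProperty.hom_ext _ this
      exact this
  · rintro ⟨hm, he⟩
    constructor
    · -- kernel is torsion (in fact zero)
      obtain ⟨A, B, i, p, w, hA, hB, hse⟩ := htp.exists_ses (kernel f)
      have : Epi p := hse.epi_g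
      have : Mono i := hse.mono_f
      have hiι : i ≫ kernel.ι f = 0 := htp.hom_zero hA hX _
      obtain ⟨h, hh⟩ := hse.exact.desc' (kernel.ι f) hiι
      -- hh : p ≫ h = kernel.ι f
      have hhf : h ≫ f = 0 := by
        have : p ≫ (h ≫ f) = p ≫ 0 := by
          rw [comp_zero, ← Category.assoc, hh, kernel.condition]
        exact (cancel_epi p).1 this
      have hhz : h = 0 := by
        have : (show (⟨B, hB⟩ : ObjectProperty.FullSubcategory F) ⟶ ⟨X, hX⟩ from ObjectProperty.homMk h) ≫
            (show (⟨X, hX⟩ : ObjectProperty.FullSubcategory F) ⟶ ⟨Y, hY⟩ from ObjectProperty.homMk f) =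
            (0 : (⟨B, hB⟩ : ObjectProperty.FullSubcategory F) ⟶ ⟨X, hX⟩) ≫
            (show (⟨X, hX⟩ : ObjectProperty.FullSubcategory F) ⟶ ⟨Y, hY⟩ from ObjectProperty.homMk f) := by
          have h0 : (0 : (⟨B, hB⟩ : ObjectProperty.FullSubcategory F) ⟶ ⟨X, hX⟩) ≫
              (show (⟨X, hX⟩ : ObjectProperty.FullSubcategory F) ⟶ ⟨Y, hY⟩ from ObjectProperty.homMk f) = 0 :=
            zero_comp
          rw [h0]
          exact ObjectProperty.hom_ext _ (by simpa using hhf)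
        simpa using congrArg (fun k => k.hom) (hm.right_cancellation _ _ this)
      have hι0 : kernel.ι f = 0 := by rw [← hh, hhz, comp_zero]
      have hKz : IsZero (kernel f) := IsZero.of_mono_eq_zero _ hι0
      exact htp.T_of_isZero hKz
    · -- cokernel is torsion
      obtain ⟨A, B, i, p, w, hA, hB, hse⟩ := htp.exists_ses (cokernel f)
      have hpe : Epi p := hse.epi_g
      have him : Mono i := hse.mono_f
      have hfc : f ≫ (cokernel.π f ≫ p) = 0 := by
        rw [← Category.assoc, cokernel.condition, zero_comp]
      have hπp : cokernel.π f ≫ p = 0 := by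
        set q : Y ⟶ B := cokernel.π f ≫ p with hq
        show q = 0
        have : (show (⟨X, hX⟩ : ObjectProperty.FullSubcategory F) ⟶ ⟨Y, hY⟩ from ObjectProperty.homMk f) ≫
            (show (⟨Y, hY⟩ : ObjectProperty.FullSubcategory F) ⟶ ⟨B, hB⟩ from ObjectProperty.homMk q) =
            (show (⟨X, hX⟩ : ObjectProperty.FullSubcategory F) ⟶ ⟨Y, hY⟩ from ObjectProperty.homMk f) ≫
            (0 : (⟨Y, hY⟩ : ObjectProperty.FullSubcategory F) ⟶ ⟨B, hB⟩) := by
          have h0 : (show (⟨X, hX⟩ : ObjectProperty.FullSubcategory F) ⟶ ⟨Y, hY⟩ from ObjectProperty.homMk f) ≫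
              (0 : (⟨Y, hY⟩ : ObjectProperty.FullSubcategory F) ⟶ ⟨B, hB⟩) = 0 := comp_zero
          rw [h0]
          exact ObjectProperty.hom_ext _ (by simpa using hfc)
        simpa using congrArg (fun k => k.hom) (he.left_cancellation _ _ this)
      have hp0 : p = 0 := (cancel_epi (cokernel.π f)).1 (by rw [hπp, comp_zero])
      have hBz : IsZero B := IsZero.of_epi_eq_zero _ hp0
      have : IsIso i := hse.isIso_f_iff.2 hBz
      exact htp.replete_T (asIso i) hA
end

section
/- Let ℰ be an additive category in which every morphism f factors as f = m ∘ p with p a cokernel (of some morphism) and m a monomorphism. Then every morphism in ℰ admits a kernel, every cokernel is the cokernel of its kernel, and the cokernel-monomorphism factorization of any morphism is unique up to isomorphism, provided pullbacks along cokernels exist and the pullback of a cokernel is a cokernel. -/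
open CategoryTheory CategoryTheory.Limits

universe v u

variable {C : Type u} [Category.{v} C] [Preadditive C]

/-- A morphism is "a cokernel" if it arises as the cokernel of some morphism. -/
def IsCokernelMor {X Y : C} (p : X ⟶ Y) : Prop :=
  ∃ (W : C) (g : W ⟶ X) (w : g ≫ p = 0), Nonempty (IsColimit (CokernelCofork.ofπ p w))


lemma IsCokernelMor.epi {X Y : C} {p : X ⟶ Y} (h : IsCokernelMor p) : Epi p := by
  obtain ⟨W, g, w, ⟨hc⟩⟩ := h
  exact ⟨fun a b hab => Cofork.IsColimit.hom_ext hc hab⟩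

/-- From DR1 we get a "zero-like" object: all in/out homs are zero. -/
lemma exists_zero_like
    (DR1 : ∀ {X Y : C} (f : X ⟶ Y), ∃ (I : C) (p : X ⟶ I) (m : I ⟶ Y),
      IsCokernelMor p ∧ Mono m ∧ p ≫ m = f) (X : C) :
    ∃ Z : C, (∀ (T : C) (a : T ⟶ Z), a = 0) ∧ (∀ (T : C) (a : Z ⟶ T), a = 0) := by
  obtain ⟨I, p, m, hp, hm, hpm⟩ := DR1 (0 : X ⟶ X)
  have hpe : Epi p := hp.epi
  have hm0 : m = 0 := by
    have : p ≫ m = p ≫ 0 := by rw [hpm, Limits.comp_zero]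
    exact (cancel_epi p).1 this
  have hin : ∀ (T : C) (a : T ⟶ I), a = 0 := by
    intro T a
    have : a ≫ m = (0 : T ⟶ I) ≫ m := by rw [hm0, Limits.comp_zero, Limits.zero_comp]
    exact (cancel_mono m).1 this
  refine ⟨I, hin, fun T a => ?_⟩
  have hid : (𝟙 I) = (0 : I ⟶ I) := hin I (𝟙 I)
  rw [← Category.id_comp a, hid, Limits.zero_comp]

/-- Every cokernel has a kernel (as concrete limit data). -/
lemma kernel_of_cokernel
    (DR1 : ∀ {X Y : C} (f : X ⟶ Y), ∃ (I : C) (p : X ⟶ I) (m : I ⟶ Y),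
      IsCokernelMor p ∧ Mono m ∧ p ≫ m = f)
    (DR2exists : ∀ {X Y T : C} (p : X ⟶ Y) (h : T ⟶ Y), IsCokernelMor p →
      ∃ (P : C) (q₁ : P ⟶ X) (q₂ : P ⟶ T), IsPullback q₁ q₂ p h)
    {X I : C} {p : X ⟶ I} (hp : IsCokernelMor p) :
    ∃ (K : C) (k : K ⟶ X) (w : k ≫ p = 0), Nonempty (IsLimit (KernelFork.ofι k w)) := by
  obtain ⟨Z, hzin, hzout⟩ := exists_zero_like DR1 X
  obtain ⟨P, q₁, q₂, hpb⟩ := DR2exists p (0 : Z ⟶ I) hp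
  have w : q₁ ≫ p = 0 := by rw [hpb.w, Limits.comp_zero]
  refine ⟨P, q₁, w, ⟨KernelFork.IsLimit.ofι q₁ w
    (fun {W'} g' hg' => hpb.lift g' 0 (by rw [hg', Limits.zero_comp])) ?_ ?_⟩⟩
  · intro W' g' hg'
    exact hpb.lift_fst _ _ _
  · intro W' g' hg' m hm
    apply hpb.hom_ext
    · rw [hm, hpb.lift_fst]
    · rw [hzin _ (m ≫ q₂), hpb.lift_snd]

/-- In an additive regular category (DR1: every morphism factors as a cokernel followed by
a monomorphism; DR2: pullbacks along cokernels exist and the pullback of a cokernel is a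
cokernel): every morphism admits a kernel, every cokernel is the cokernel of its kernel,
and the cokernel-mono factorization is unique up to isomorphism. -/
theorem additive_regular_basic_properties
    (DR1 : ∀ {X Y : C} (f : X ⟶ Y), ∃ (I : C) (p : X ⟶ I) (m : I ⟶ Y),
      IsCokernelMor p ∧ Mono m ∧ p ≫ m = f)
    (DR2exists : ∀ {X Y T : C} (p : X ⟶ Y) (h : T ⟶ Y), IsCokernelMor p →
      ∃ (P : C) (q₁ : P ⟶ X) (q₂ : P ⟶ T), IsPullback q₁ q₂ p h)
    (DR2stable : ∀ {P X Y T : C} {q₁ : P ⟶ X} {q₂ : P ⟶ T} {p : X ⟶ Y} {h : T ⟶ Y},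
      IsPullback q₁ q₂ p h → IsCokernelMor p → IsCokernelMor q₂) :
    -- (1) every morphism admits a kernel
    (∀ {X Y : C} (f : X ⟶ Y), HasKernel f) ∧
    -- (2) every cokernel is the cokernel of its kernel
    (∀ {X Y : C} (p : X ⟶ Y), IsCokernelMor p →
      ∀ (K : C) (k : K ⟶ X) (w : k ≫ p = 0), IsLimit (KernelFork.ofι k w) →
        Nonempty (IsColimit (CokernelCofork.ofπ p w))) ∧
    -- (3) uniqueness of the cokernel-mono factorization
    (∀ {X Y : C} (f : X ⟶ Y) {I₁ I₂ : C} (p₁ : X ⟶ I₁) (m₁ : I₁ ⟶ Y)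
        (p₂ : X ⟶ I₂) (m₂ : I₂ ⟶ Y),
      IsCokernelMor p₁ → Mono m₁ → p₁ ≫ m₁ = f →
      IsCokernelMor p₂ → Mono m₂ → p₂ ≫ m₂ = f →
      ∃ e : I₁ ≅ I₂, p₁ ≫ e.hom = p₂ ∧ e.hom ≫ m₂ = m₁) := by
  -- (2) first (no DR2 needed)
  have part2 : ∀ {X Y : C} (p : X ⟶ Y), IsCokernelMor p →
      ∀ (K : C) (k : K ⟶ X) (w : k ≫ p = 0), IsLimit (KernelFork.ofι k w) →
        Nonempty (IsColimit (CokernelCofork.ofπ p w)) := by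
    intro X Y p hp K k w hl
    obtain ⟨W, g, wg, ⟨hc⟩⟩ := hp
    have hpe : Epi p := IsCokernelMor.epi ⟨W, g, wg, ⟨hc⟩⟩
    refine ⟨CokernelCofork.IsColimit.ofπ' p w ?_⟩
    intro A t ht
    -- show g ≫ t = 0
    obtain ⟨l, hl'⟩ := KernelFork.IsLimit.lift' hl g wg
    rw [Fork.ι_ofι] at hl'
    have hg : g ≫ t = 0 := by
      rw [← hl', Category.assoc, ht, Limits.comp_zero]
    exact CokernelCofork.IsColimit.desc' hc t hg
  -- kernel data of any morphism
  have kerdata : ∀ {X Y : C} (f : X ⟶ Y),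
      ∃ (K : C) (k : K ⟶ X) (w : k ≫ f = 0), Nonempty (IsLimit (KernelFork.ofι k w)) := by
    intro X Y f
    obtain ⟨I, p, m, hp, hm, hpm⟩ := DR1 f
    obtain ⟨K, k, w, ⟨hl⟩⟩ := kernel_of_cokernel DR1 DR2exists hp
    have w' : k ≫ f = 0 := by rw [← hpm, ← Category.assoc, w, Limits.zero_comp]
    refine ⟨K, k, w', ⟨?_⟩⟩
    exact isKernelCompMono hl m hpm.symm
  refine ⟨?_, part2, ?_⟩
  · intro X Y f
    obtain ⟨K, k, w, ⟨hl⟩⟩ := kerdata f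
    exact HasLimit.mk ⟨_, hl⟩
  · intro X Y f I₁ I₂ p₁ m₁ p₂ m₂ hp₁ hm₁ h₁ hp₂ hm₂ h₂
    have hpe₁ : Epi p₁ := hp₁.epi
    have hpe₂ : Epi p₂ := hp₂.epi
    obtain ⟨K₁, k₁, w₁, ⟨hl₁⟩⟩ := kernel_of_cokernel DR1 DR2exists hp₁
    obtain ⟨K₂, k₂, w₂, ⟨hl₂⟩⟩ := kernel_of_cokernel DR1 DR2exists hp₂
    obtain ⟨hc₁⟩ := part2 p₁ hp₁ K₁ k₁ w₁ hl₁
    obtain ⟨hc₂⟩ := part2 p₂ hp₂ K₂ k₂ w₂ hl₂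
    have hk₁p₂ : k₁ ≫ p₂ = 0 := by
      have : (k₁ ≫ p₂) ≫ m₂ = (0 : K₁ ⟶ I₂) ≫ m₂ := by
        rw [Category.assoc, h₂, ← h₁, ← Category.assoc, w₁, Limits.zero_comp,
          Limits.zero_comp]
      exact (cancel_mono m₂).1 this
    have hk₂p₁ : k₂ ≫ p₁ = 0 := by
      have : (k₂ ≫ p₁) ≫ m₁ = (0 : K₂ ⟶ I₁) ≫ m₁ := by
        rw [Category.assoc, h₁, ← h₂, ← Category.assoc, w₂, Limits.zero_comp,
          Limits.zero_comp]
      exact (cancel_mono m₁).1 this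
    obtain ⟨e₁, he₁⟩ := CokernelCofork.IsColimit.desc' hc₁ p₂ hk₁p₂
    obtain ⟨e₂, he₂⟩ := CokernelCofork.IsColimit.desc' hc₂ p₁ hk₂p₁
    rw [Cofork.π_ofπ] at he₁ he₂
    have h12 : e₁ ≫ e₂ = 𝟙 I₁ := by
      have : p₁ ≫ e₁ ≫ e₂ = p₁ ≫ 𝟙 I₁ := by
        rw [← Category.assoc, he₁, he₂, Category.comp_id]
      exact (cancel_epi p₁).1 this
    have h21 : e₂ ≫ e₁ = 𝟙 I₂ := by
      have : p₂ ≫ e₂ ≫ e₁ = p₂ ≫ 𝟙 I₂ := by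
        rw [← Category.assoc, he₂, he₁, Category.comp_id]
      exact (cancel_epi p₂).1 this
    refine ⟨⟨e₁, e₂, h12, h21⟩, he₁, ?_⟩
    have : p₁ ≫ e₁ ≫ m₂ = p₁ ≫ m₁ := by
      rw [← Category.assoc, he₁, h₂, h₁]
    exact (cancel_epi p₁).1 this
end

section
/- Let ℰ be a deflation-exact category with admissible kernels. Then every morphism g : Y → Z in ℰ factors as a deflation Y ↠ coim(g) followed by a monomorphism coim(g) ↪ Z, and this deflation-mono factorization is unique up to isomorphism. -/
open CategoryTheory CategoryTheory.Limits

universe v u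

/-- A conflation structure on an additive category: a class of kernel-cokernel pairs,
closed under isomorphisms. -/
structure ConflationStructure (C : Type u) [Category.{v} C] [Preadditive C] where
  conf : ∀ ⦃X Y Z : C⦄, (X ⟶ Y) → (Y ⟶ Z) → Prop
  comp_zero : ∀ {X Y Z : C} {f : X ⟶ Y} {g : Y ⟶ Z}, conf f g → f ≫ g = 0
  isKernel : ∀ {X Y Z : C} {f : X ⟶ Y} {g : Y ⟶ Z} (h : conf f g),
    Nonempty (IsLimit (KernelFork.ofι f (comp_zero h)))
  isCokernel : ∀ {X Y Z : C} {f : X ⟶ Y} {g : Y ⟶ Z} (h : conf f g),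
    Nonempty (IsColimit (CokernelCofork.ofπ g (comp_zero h)))
  iso_closed : ∀ {X Y Z X' Y' Z' : C} {f : X ⟶ Y} {g : Y ⟶ Z}
    (eX : X' ≅ X) (eY : Y ≅ Y') (eZ : Z ≅ Z'), conf f g →
    conf (eX.hom ≫ f ≫ eY.hom) (eY.inv ≫ g ≫ eZ.hom)

/-- An inflation is the kernel part of a conflation. -/
def ConflationStructure.Inflation {C : Type u} [Category.{v} C] [Preadditive C]
    (S : ConflationStructure C) {X Y : C} (f : X ⟶ Y) : Prop :=
  ∃ (Z : C) (g : Y ⟶ Z), S.conf f g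

/-- A deflation is the cokernel part of a conflation. -/
def ConflationStructure.Deflation {C : Type u} [Category.{v} C] [Preadditive C]
    (S : ConflationStructure C) {Y Z : C} (g : Y ⟶ Z) : Prop :=
  ∃ (X : C) (f : X ⟶ Y), S.conf f g

/-- Axioms of a deflation-exact category: R0 (X → 0 is a deflation), R1 (deflations
are closed under composition), R2 (pullbacks of deflations exist and deflations are
stable under pullback). -/
structure IsDeflationExact {C : Type u} [Category.{v} C] [Preadditive C]
    (S : ConflationStructure C) : Prop where
  R0 : ∀ X : C, ∃ (Z : C) (g : X ⟶ Z), IsZero Z ∧ S.Deflation g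
  R1 : ∀ {X Y Z : C} {f : X ⟶ Y} {g : Y ⟶ Z}, S.Deflation f → S.Deflation g →
    S.Deflation (f ≫ g)
  R2_exists : ∀ {Y Z T : C} (g : Y ⟶ Z) (h : T ⟶ Z), S.Deflation g →
    ∃ (P : C) (p₁ : P ⟶ Y) (p₂ : P ⟶ T), IsPullback p₁ p₂ g h
  R2_stable : ∀ {P Y Z T : C} {p₁ : P ⟶ Y} {p₂ : P ⟶ T} {g : Y ⟶ Z} {h : T ⟶ Z},
    IsPullback p₁ p₂ g h → S.Deflation g → S.Deflation p₂

/-- A conflation category has admissible kernels if every morphism admits a kernel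
and all kernels are inflations. -/
def HasAdmissibleKernels {C : Type u} [Category.{v} C] [Preadditive C]
    (S : ConflationStructure C) : Prop :=
  ∀ {X Y : C} (f : X ⟶ Y), ∃ (K : C) (k : K ⟶ X) (w : k ≫ f = 0),
    Nonempty (IsLimit (KernelFork.ofι k w)) ∧ S.Inflation k


/-- Deflations are epimorphisms. -/
lemma ConflationStructure.Deflation.epi {C : Type u} [Category.{v} C] [Preadditive C]
    {S : ConflationStructure C} {Y Z : C} {g : Y ⟶ Z} (h : S.Deflation g) : Epi g := by
  obtain ⟨X, f, hc⟩ := h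
  obtain ⟨hcolim⟩ := S.isCokernel hc
  exact ⟨fun u v huv => Cofork.IsColimit.hom_ext hcolim (by simpa using huv)⟩

/-- In a deflation-exact category with admissible kernels, every morphism factors as a
deflation followed by a monomorphism, and this deflation-mono factorization is unique up
to isomorphism. -/
theorem deflation_mono_factorization
    {C : Type u} [Category.{v} C] [Preadditive C]
    (S : ConflationStructure C) (hde : IsDeflationExact S)
    (hak : HasAdmissibleKernels S) :
    -- existence of a deflation-mono factorization
    (∀ {Y Z : C} (g : Y ⟶ Z), ∃ (I : C) (p : Y ⟶ I) (m : I ⟶ Z),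
      S.Deflation p ∧ Mono m ∧ p ≫ m = g) ∧
    -- uniqueness up to isomorphism
    (∀ {Y Z : C} (g : Y ⟶ Z) {I₁ I₂ : C} (p₁ : Y ⟶ I₁) (m₁ : I₁ ⟶ Z)
        (p₂ : Y ⟶ I₂) (m₂ : I₂ ⟶ Z),
      S.Deflation p₁ → Mono m₁ → p₁ ≫ m₁ = g →
      S.Deflation p₂ → Mono m₂ → p₂ ≫ m₂ = g →
      ∃ e : I₁ ≅ I₂, p₁ ≫ e.hom = p₂ ∧ e.hom ≫ m₂ = m₁) := by
  constructor
  · intro Y Z g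
    obtain ⟨K, k, w, ⟨hlim⟩, I, p, hconf⟩ := hak g
    have hdp : S.Deflation p := ⟨K, k, hconf⟩
    obtain ⟨hcolim⟩ := S.isCokernel hconf
    obtain ⟨m, hm⟩ := CokernelCofork.IsColimit.desc' hcolim g w
    simp only [Cofork.π_ofπ] at hm
    refine ⟨I, p, m, hdp, ?_, hm⟩
    apply Preadditive.mono_of_cancel_zero
    intro T t ht
    obtain ⟨P, q₁, q₂, hpb⟩ := hde.R2_exists p t hdp
    have hq₂ : S.Deflation q₂ := hde.R2_stable hpb hdp
    have hepi : Epi q₂ := hq₂.epi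
    have hq₁g : q₁ ≫ g = 0 := by
      calc q₁ ≫ g = (q₁ ≫ p) ≫ m := by rw [Category.assoc, hm]
        _ = q₂ ≫ t ≫ m := by rw [hpb.w, Category.assoc]
        _ = 0 := by rw [ht, Limits.comp_zero]
    obtain ⟨l, hl⟩ := KernelFork.IsLimit.lift' hlim q₁ hq₁g
    simp only [Fork.ι_ofι] at hl
    have hz : q₂ ≫ t = 0 := by
      have hkp : k ≫ p = 0 := S.comp_zero hconf
      calc q₂ ≫ t = q₁ ≫ p := hpb.w.symm
        _ = l ≫ k ≫ p := by rw [← Category.assoc, hl]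
        _ = 0 := by rw [hkp, Limits.comp_zero]
    rw [← cancel_epi q₂, hz, Limits.comp_zero]
  · intro Y Z g I₁ I₂ p₁ m₁ p₂ m₂ hd₁ hm₁ hf₁ hd₂ hm₂ hf₂
    obtain ⟨X₁, f₁, hc₁⟩ := hd₁
    obtain ⟨X₂, f₂, hc₂⟩ := hd₂
    obtain ⟨hco₁⟩ := S.isCokernel hc₁
    obtain ⟨hco₂⟩ := S.isCokernel hc₂
    have hep₁ : Epi p₁ := ConflationStructure.Deflation.epi ⟨X₁, f₁, hc₁⟩
    have hep₂ : Epi p₂ := ConflationStructure.Deflation.epi ⟨X₂, f₂, hc₂⟩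
    have h12 : f₁ ≫ p₂ = 0 := by
      rw [← cancel_mono m₂, Category.assoc, hf₂, ← hf₁, ← Category.assoc,
        S.comp_zero hc₁, Limits.zero_comp, Limits.zero_comp]
    have h21 : f₂ ≫ p₁ = 0 := by
      rw [← cancel_mono m₁, Category.assoc, hf₁, ← hf₂, ← Category.assoc,
        S.comp_zero hc₂, Limits.zero_comp, Limits.zero_comp]
    obtain ⟨e₁₂, hpe₁⟩ := CokernelCofork.IsColimit.desc' hco₁ p₂ h12
    obtain ⟨e₂₁, hpe₂⟩ := CokernelCofork.IsColimit.desc' hco₂ p₁ h21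
    simp only [Cofork.π_ofπ] at hpe₁ hpe₂
    refine ⟨⟨e₁₂, e₂₁, ?_, ?_⟩, hpe₁, ?_⟩
    · rw [← cancel_epi p₁, ← Category.assoc, hpe₁, hpe₂, Category.comp_id]
    · rw [← cancel_epi p₂, ← Category.assoc, hpe₂, hpe₁, Category.comp_id]
    · dsimp only
      rw [← cancel_epi p₁, ← Category.assoc, hpe₁, hf₂, hf₁]
end

section
/- Let ℰ be an additive category with kernels, and let 𝒜 be an abelian category. If F : ℰ → 𝒜 is an additive functor commuting with kernels, then the unique right exact extension F̄ : mod(ℰ) → 𝒜 of F along the Yoneda embedding is an exact functor. -/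
open CategoryTheory CategoryTheory.Limits

universe v u v₂ u₂ v₃ u₃

/-- An abstract characterization of the category `mod(ℰ)` of finitely presented
functors on an additive category ℰ with kernels, together with its Yoneda embedding
`Yo : ℰ ⥤ M`: `Yo` is fully faithful, additive and preserves kernels, representable
objects are exactly the projectives, and every object admits a presentation by
representables. -/
structure IsModCategory {C : Type u} [Category.{v} C] [Preadditive C]
    {M : Type u₂} [Category.{v₂} M] [Abelian M] (Yo : C ⥤ M) : Prop where
  full : Yo.Full
  faithful : Yo.Faithful
  additive : Yo.Additive
  preserves_kernels : ∀ {A B : C} (f : A ⟶ B), PreservesLimit (parallelPair f 0) Yo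
  projective_rep : ∀ E : C, Projective (Yo.obj E)
  rep_of_projective : ∀ P : M, Projective P → ∃ E : C, Nonempty (P ≅ Yo.obj E)
  presentation : ∀ M₀ : M, ∃ (A B : C) (f : A ⟶ B), Nonempty (cokernel (Yo.map f) ≅ M₀)

section Aux

variable {A : Type u₃} [Category.{v₃} A] [Abelian A]

/-- In an abelian category, a generalized element of the target of an epimorphism can be
lifted after pulling back along an epimorphism. -/
lemma aux_epi_lift {Y Z Cv : A} (q : Y ⟶ Z) [Epi q] (w : Cv ⟶ Z) :
    ∃ (D : A) (π : D ⟶ Cv) (u : D ⟶ Y), Epi π ∧ u ≫ q = π ≫ w :=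
  ⟨pullback w q, pullback.fst w q, pullback.snd w q, inferInstance, pullback.condition.symm⟩

/-- In an abelian category, if `q` is a cokernel of `t` and `w` is killed by `q`, then
after pulling back along an epimorphism, `w` factors through `t`. -/
lemma aux_exact_lift {X Y Z Cv : A} (t : X ⟶ Y) (q : Y ⟶ Z) (ht : t ≫ q = 0)
    (hq : IsColimit (CokernelCofork.ofπ q ht)) (w : Cv ⟶ Y) (hw : w ≫ q = 0) :
    ∃ (D : A) (π : D ⟶ Cv) (u : D ⟶ X), Epi π ∧ u ≫ t = π ≫ w := by
  have hiso : q ≫ (hq.coconePointUniqueUpToIso (cokernelIsCokernel t)).hom = cokernel.π t := by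
    simpa using hq.comp_coconePointUniqueUpToIso_hom (cokernelIsCokernel t)
      WalkingParallelPair.one
  have hw' : w ≫ cokernel.π t = 0 := by
    rw [← hiso, ← Category.assoc, hw, zero_comp]
  set w' : Cv ⟶ Abelian.image t := kernel.lift (cokernel.π t) w hw' with hw'def
  refine ⟨pullback w' (Abelian.factorThruImage t), pullback.fst _ _, pullback.snd _ _,
    inferInstance, ?_⟩
  have hcond : pullback.fst w' (Abelian.factorThruImage t) ≫ w'
      = pullback.snd w' (Abelian.factorThruImage t) ≫ Abelian.factorThruImage t :=
    pullback.condition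
  calc pullback.snd w' (Abelian.factorThruImage t) ≫ t
      = pullback.snd w' (Abelian.factorThruImage t)
        ≫ Abelian.factorThruImage t ≫ Abelian.image.ι t := by rw [Abelian.image.fac]
    _ = (pullback.fst w' (Abelian.factorThruImage t) ≫ w') ≫ Abelian.image.ι t := by
        rw [← Category.assoc, hcond]
    _ = pullback.fst w' (Abelian.factorThruImage t) ≫ w := by
        have hlift : w' ≫ Abelian.image.ι t = w := kernel.lift_ι _ _ _
        rw [Category.assoc, hlift]

end Aux

/-- Let ℰ be an additive category with kernels and 𝒜 an abelian category.  If an additive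
functor `F : ℰ ⥤ 𝒜` commutes with kernels, then any right exact extension
`F̄ : mod(ℰ) ⥤ 𝒜` of `F` along the Yoneda embedding (which is unique up to natural
isomorphism) is exact, i.e. also preserves finite limits. -/
theorem rightExact_extension_is_exact
    {C : Type u} [Category.{v} C] [Preadditive C] [HasKernels C]
    {M : Type u₂} [Category.{v₂} M] [Abelian M] (Yo : C ⥤ M) (hM : IsModCategory Yo)
    {A : Type u₃} [Category.{v₃} A] [Abelian A]
    (F : C ⥤ A) (hFadd : F.Additive)
    (hFker : ∀ {X X' : C} (f : X ⟶ X'), PreservesLimit (parallelPair f 0) F)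
    (Fbar : M ⥤ A) (hadd : Fbar.Additive) (hre : PreservesFiniteColimits Fbar)
    (e : Yo ⋙ Fbar ≅ F) :
    PreservesFiniteLimits Fbar := by
  haveI := hre
  haveI := hadd
  haveI := hFadd
  haveI := hM.full
  haveI := hM.faithful
  haveI := hM.additive
  -- Fbar preserves epimorphisms
  haveI : Fbar.PreservesEpimorphisms := inferInstance
  -- Every object of M admits an epimorphism from a representable which is a cokernel of a
  -- morphism between representables.
  have hpres : ∀ M₀ : M, ∃ (Ao Bo : C) (p : Yo.obj Bo ⟶ M₀) (t : Yo.obj Ao ⟶ Yo.obj Bo)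
      (ht : t ≫ p = 0), Epi p ∧ Nonempty (IsColimit (CokernelCofork.ofπ p ht)) := by
    intro M₀
    obtain ⟨Ao, Bo, f, ⟨ι⟩⟩ := hM.presentation M₀
    refine ⟨Ao, Bo, cokernel.π (Yo.map f) ≫ ι.hom, Yo.map f, ?_, inferInstance, ⟨?_⟩⟩
    · rw [← Category.assoc, cokernel.condition, zero_comp]
    · exact IsColimit.ofIsoColimit (cokernelIsCokernel (Yo.map f))
        (Cofork.ext ι rfl)
  -- Kernels of maps between projectives: an `Fbar`-level factorization property.
  have hker : ∀ (P Q : M), Projective P → Projective Q → ∀ φ : P ⟶ Q,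
      ∃ (R : M) (κ : R ⟶ P), κ ≫ φ = 0 ∧
        ∀ (Cc : A) (z : Cc ⟶ Fbar.obj P), z ≫ Fbar.map φ = 0 →
          ∃ v : Cc ⟶ Fbar.obj R, v ≫ Fbar.map κ = z := by
    intro P Q hP hQ φ
    obtain ⟨Ep, ⟨α⟩⟩ := hM.rep_of_projective P hP
    obtain ⟨Eq', ⟨β⟩⟩ := hM.rep_of_projective Q hQ
    set f : Ep ⟶ Eq' := Yo.preimage (α.inv ≫ φ ≫ β.hom) with hfdef
    have hf : Yo.map f = α.inv ≫ φ ≫ β.hom := Yo.map_preimage _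
    set k : kernel f ⟶ Ep := kernel.ι f with hkdef
    refine ⟨Yo.obj (kernel f), Yo.map k ≫ α.inv, ?_, ?_⟩
    · have h0 : Yo.map k ≫ Yo.map f = 0 := by
        rw [← Yo.map_comp, kernel.condition, Yo.map_zero]
      have h1 : (Yo.map k ≫ α.inv ≫ φ) ≫ β.hom = 0 := by
        simpa [hf, Category.assoc] using h0
      have := h1 =≫ β.inv
      simpa using this
    · intro Cc z hz
      haveI := hFker f
      haveI : PreservesLimit (parallelPair f 0) (Yo ⋙ Fbar) :=
        preservesLimit_of_natIso _ e.symm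
      have hlim := isLimitForkMapOfIsLimit' (Yo ⋙ Fbar) (kernel.condition f)
        (kernelIsKernel f)
      have hz' : (z ≫ Fbar.map α.hom) ≫ (Yo ⋙ Fbar).map f = 0 := by
        have heq : (Yo ⋙ Fbar).map f = Fbar.map (α.inv ≫ φ ≫ β.hom) := by
          show Fbar.map (Yo.map f) = _
          rw [hf]
        have h2 : Fbar.map α.hom ≫ Fbar.map α.inv = 𝟙 _ := by
          rw [← Fbar.map_comp, Iso.hom_inv_id, Fbar.map_id]
        rw [heq]
        simp only [CategoryTheory.Functor.map_comp, Category.assoc]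
        rw [reassoc_of% h2] <;> try rfl
        rw [← Category.assoc, hz, zero_comp]
      obtain ⟨l, hl⟩ := KernelFork.IsLimit.lift' hlim (z ≫ Fbar.map α.hom) hz'
      refine ⟨l, ?_⟩
      have hl' : l ≫ Fbar.map (Yo.map k) = z ≫ Fbar.map α.hom := hl
      rw [CategoryTheory.Functor.map_comp, ← Category.assoc, hl', Category.assoc,
        ← Fbar.map_comp, Iso.hom_inv_id, Fbar.map_id, Category.comp_id]
  -- Fbar preserves monomorphisms
  have hmono : ∀ (M₀ M₁ : M) (m : M₀ ⟶ M₁), Mono m → Mono (Fbar.map m) := by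
    intro M₀ M₁ m hm
    obtain ⟨A₁, B₁, p₁, t, htp, hp₁epi, ⟨hp₁coker⟩⟩ := hpres M₁
    haveI := hp₁epi
    obtain ⟨A₀', B₀, r, _, _, hrepi, -⟩ := hpres (pullback m p₁)
    haveI := hrepi
    set g : Yo.obj B₀ ⟶ Yo.obj B₁ := r ≫ pullback.snd m p₁ with hgdef
    set p₀ : Yo.obj B₀ ⟶ M₀ := r ≫ pullback.fst m p₁ with hp₀def
    have hcomm : p₀ ≫ m = g ≫ p₁ := by
      rw [hp₀def, hgdef, Category.assoc, Category.assoc, pullback.condition]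
    haveI : Epi p₀ := by rw [hp₀def]; exact epi_comp _ _
    haveI := hM.projective_rep B₀
    haveI := hM.projective_rep A₁
    haveI := hM.projective_rep B₁
    set φ : (Yo.obj B₀ ⊞ Yo.obj A₁) ⟶ Yo.obj B₁ := biprod.desc g (-t) with hφdef
    obtain ⟨R, κ, hκφ, hfac⟩ := hker _ _ inferInstance inferInstance φ
    refine Preadditive.mono_of_cancel_zero _ (fun {Cc} c hc => ?_)
    haveI : Epi (Fbar.map p₀) := Fbar.map_epi _
    obtain ⟨D₁, π₁, y, hπ₁, hy⟩ := aux_epi_lift (Fbar.map p₀) c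
    haveI := hπ₁
    have h1 : (y ≫ Fbar.map g) ≫ Fbar.map p₁ = 0 := by
      rw [Category.assoc, ← Fbar.map_comp, ← hcomm, Fbar.map_comp, ← Category.assoc, hy,
        Category.assoc, hc, comp_zero]
    have htp' : Fbar.map t ≫ Fbar.map p₁ = 0 := by
      rw [← Fbar.map_comp, htp, Fbar.map_zero]
    have hcok' : IsColimit (CokernelCofork.ofπ (Fbar.map p₁) htp') := by
      simpa using isColimitCoforkMapOfIsColimit' Fbar htp hp₁coker
    obtain ⟨D₂, π₂, u, hπ₂, hu⟩ := aux_exact_lift _ _ htp' hcok' (y ≫ Fbar.map g) h1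
    haveI := hπ₂
    set z : D₂ ⟶ Fbar.obj (Yo.obj B₀ ⊞ Yo.obj A₁) :=
      (π₂ ≫ y) ≫ Fbar.map biprod.inl + u ≫ Fbar.map biprod.inr with hzdef
    have hzφ : z ≫ Fbar.map φ = 0 := by
      have e1 : Fbar.map (biprod.inl : Yo.obj B₀ ⟶ _) ≫ Fbar.map φ = Fbar.map g := by
        rw [← Fbar.map_comp, hφdef, biprod.inl_desc]
      have e2 : Fbar.map (biprod.inr : Yo.obj A₁ ⟶ _) ≫ Fbar.map φ = -Fbar.map t := by
        rw [← Fbar.map_comp, hφdef, biprod.inr_desc, Fbar.map_neg]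
      rw [hzdef, Preadditive.add_comp]
      simp only [Category.assoc]
      rw [e1, e2, Preadditive.comp_neg, hu]
      simp
    obtain ⟨v, hv⟩ := hfac D₂ z hzφ
    have hκ0 : κ ≫ biprod.fst ≫ p₀ = 0 := by
      have hφeq : φ = biprod.fst ≫ g - biprod.snd ≫ t := by
        rw [hφdef, biprod.desc_eq, Preadditive.comp_neg, ← sub_eq_add_neg]
      have key : κ ≫ biprod.fst ≫ g = κ ≫ biprod.snd ≫ t := by
        have h := hκφ
        rw [hφeq, Preadditive.comp_sub, sub_eq_zero] at h
        simpa only [Category.assoc] using h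
      have hk := key =≫ p₁
      simp only [Category.assoc] at hk
      have h2 : (κ ≫ biprod.fst ≫ p₀) ≫ m = 0 := by
        simp only [Category.assoc, hcomm, hk]
        simp only [htp, comp_zero]
      exact zero_of_comp_mono m h2
    have hzfst : z ≫ Fbar.map (biprod.fst : (Yo.obj B₀ ⊞ Yo.obj A₁) ⟶ Yo.obj B₀) = π₂ ≫ y := by
      have e3 : Fbar.map (biprod.inl : Yo.obj B₀ ⟶ _)
          ≫ Fbar.map (biprod.fst : (Yo.obj B₀ ⊞ Yo.obj A₁) ⟶ Yo.obj B₀) = 𝟙 _ := by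
        rw [← Fbar.map_comp, biprod.inl_fst, Fbar.map_id]
      have e4 : Fbar.map (biprod.inr : Yo.obj A₁ ⟶ _)
          ≫ Fbar.map (biprod.fst : (Yo.obj B₀ ⊞ Yo.obj A₁) ⟶ Yo.obj B₀) = 0 := by
        rw [← Fbar.map_comp, biprod.inr_fst, Fbar.map_zero]
      rw [hzdef, Preadditive.add_comp]
      simp only [Category.assoc]
      rw [e3, e4, Category.comp_id, comp_zero, add_zero]
    have hfin : π₂ ≫ π₁ ≫ c = 0 := by
      calc π₂ ≫ π₁ ≫ c = π₂ ≫ y ≫ Fbar.map p₀ := by rw [hy]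
        _ = (z ≫ Fbar.map biprod.fst) ≫ Fbar.map p₀ := by rw [hzfst, Category.assoc]
        _ = v ≫ Fbar.map (κ ≫ biprod.fst ≫ p₀) := by
            rw [← hv]
            simp only [CategoryTheory.Functor.map_comp, Category.assoc]
        _ = 0 := by rw [hκ0, Fbar.map_zero, comp_zero]
    rw [← cancel_epi π₁, ← cancel_epi π₂, comp_zero, comp_zero]
    exact hfin
  haveI : Fbar.PreservesMonomorphisms := ⟨fun f hf => hmono _ _ f hf⟩
  haveI : ∀ {X Y : M} (f : X ⟶ Y), PreservesColimit (parallelPair f 0) Fbar :=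
    fun f => inferInstance
  haveI := Functor.preservesHomology_of_preservesMonos_and_cokernels Fbar
  haveI : ∀ {X Y : M} (f : X ⟶ Y), PreservesLimit (parallelPair f 0) Fbar :=
    fun f => Functor.PreservesHomology.preservesKernel Fbar f
  exact Functor.preservesFiniteLimits_of_preservesKernels Fbar
end

section
/- Let ℰ be an additive category with kernels. For an object M of mod(ℰ), the following are equivalent: (1) M has projective dimension at most one; (2) M ≅ coker ヨ(f) for a monomorphism f of ℰ; (3) every morphism f of ℰ with M ≅ coker ヨ(f) factors as f = m ∘ p with p a split epimorphism and m a monomorphism. -/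
open CategoryTheory CategoryTheory.Limits

universe v u v₂ u₂

/-- Let ℰ be an additive category with kernels and `mod(ℰ)` its category of finitely
presented functors, with Yoneda embedding `Yo`.  For `M₀ ∈ mod(ℰ)` the following are
equivalent: (1) `M₀` has projective dimension at most one; (2) `M₀ ≅ coker Yo(f)` for a
monomorphism `f` of ℰ; (3) every morphism `f` of ℰ with `M₀ ≅ coker Yo(f)` factors as
`f = m ∘ p` with `p` a split epimorphism and `m` a monomorphism. -/
theorem projective_dimension_le_one_tfae
    {C : Type u} [Category.{v} C] [Preadditive C] [HasKernels C]
    {M : Type u₂} [Category.{v₂} M] [Abelian M] (Yo : C ⥤ M) (hM : IsModCategory Yo)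
    (M₀ : M) :
    -- (1) ↔ (2)
    ((∃ (P₁ P₀ : M) (i : P₁ ⟶ P₀) (q : P₀ ⟶ M₀) (w : i ≫ q = 0),
        Projective P₁ ∧ Projective P₀ ∧ (ShortComplex.mk i q w).ShortExact) ↔
      (∃ (A B : C) (f : A ⟶ B), Mono f ∧ Nonempty (M₀ ≅ cokernel (Yo.map f)))) ∧
    -- (1) ↔ (3)
    ((∃ (P₁ P₀ : M) (i : P₁ ⟶ P₀) (q : P₀ ⟶ M₀) (w : i ≫ q = 0),
        Projective P₁ ∧ Projective P₀ ∧ (ShortComplex.mk i q w).ShortExact) ↔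
      (∀ (A B : C) (f : A ⟶ B), Nonempty (M₀ ≅ cokernel (Yo.map f)) →
        ∃ (I : C) (p : A ⟶ I) (m : I ⟶ B), IsSplitEpi p ∧ Mono m ∧ p ≫ m = f)) := by
  haveI := hM.full
  haveI := hM.faithful
  haveI := hM.additive
  -- Yo preserves monomorphisms
  have monoMap : ∀ {A B : C} (f : A ⟶ B), Mono f → Mono (Yo.map f) := by
    intro A B f hf
    haveI := hM.preserves_kernels f
    have h0 : kernel.ι f = 0 := by
      rw [← cancel_mono f, kernel.condition, zero_comp]
    apply Preadditive.mono_of_kernel_zero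
    have h := kernelComparison_comp_ι f Yo
    rw [h0, Yo.map_zero] at h
    rw [← cancel_epi (kernelComparison f Yo), comp_zero]
    exact h
  -- (2) → (1)
  have h21 : (∃ (A B : C) (f : A ⟶ B), Mono f ∧ Nonempty (M₀ ≅ cokernel (Yo.map f))) →
      (∃ (P₁ P₀ : M) (i : P₁ ⟶ P₀) (q : P₀ ⟶ M₀) (w : i ≫ q = 0),
        Projective P₁ ∧ Projective P₀ ∧ (ShortComplex.mk i q w).ShortExact) := by
    rintro ⟨A, B, f, hf, ⟨e⟩⟩
    haveI : Mono (Yo.map f) := monoMap f hf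
    refine ⟨Yo.obj A, Yo.obj B, Yo.map f, cokernel.π (Yo.map f) ≫ e.inv, ?_,
      hM.projective_rep A, hM.projective_rep B, ?_⟩
    · rw [← Category.assoc, cokernel.condition, zero_comp]
    · have hex0 : (ShortComplex.mk (Yo.map f) (cokernel.π (Yo.map f))
          (cokernel.condition _)).Exact :=
        ShortComplex.exact_of_g_is_cokernel _ (cokernelIsCokernel _)
      have eS : (ShortComplex.mk (Yo.map f) (cokernel.π (Yo.map f))
            (cokernel.condition _)) ≅ (ShortComplex.mk (Yo.map f)
            (cokernel.π (Yo.map f) ≫ e.inv)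
            (by rw [← Category.assoc, cokernel.condition, zero_comp])) :=
        ShortComplex.isoMk (Iso.refl _) (Iso.refl _) e.symm (by simp) (by simp)
      exact { exact := (ShortComplex.exact_iff_of_iso eS).1 hex0 }
  -- (1) → (3)
  have h13 : (∃ (P₁ P₀ : M) (i : P₁ ⟶ P₀) (q : P₀ ⟶ M₀) (w : i ≫ q = 0),
        Projective P₁ ∧ Projective P₀ ∧ (ShortComplex.mk i q w).ShortExact) →
      (∀ (A B : C) (f : A ⟶ B), Nonempty (M₀ ≅ cokernel (Yo.map f)) →
        ∃ (I : C) (p : A ⟶ I) (m : I ⟶ B), IsSplitEpi p ∧ Mono m ∧ p ≫ m = f) := by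
    rintro ⟨P₁, P₀, i, q, w, hP₁, hP₀, hse⟩ A B f ⟨e⟩
    haveI : Mono i := hse.mono_f
    haveI : Epi q := hse.epi_g
    have wπ : Yo.map f ≫ (cokernel.π (Yo.map f) ≫ e.inv) = 0 := by
      rw [← Category.assoc, cokernel.condition, zero_comp]
    set π : Yo.obj B ⟶ M₀ := cokernel.π (Yo.map f) ≫ e.inv with hπ
    haveI : Epi π := epi_comp _ _
    have hS : (ShortComplex.mk (Yo.map f) π wπ).Exact := by
      have hex0 : (ShortComplex.mk (Yo.map f) (cokernel.π (Yo.map f))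
          (cokernel.condition _)).Exact :=
        ShortComplex.exact_of_g_is_cokernel _ (cokernelIsCokernel _)
      have eS : (ShortComplex.mk (Yo.map f) (cokernel.π (Yo.map f))
            (cokernel.condition _)) ≅ (ShortComplex.mk (Yo.map f) π wπ) :=
        ShortComplex.isoMk (Iso.refl _) (Iso.refl _) e.symm (by simp) (by simp [hπ])
      exact (ShortComplex.exact_iff_of_iso eS).1 hex0
    set J := kernel π with hJdef
    set j : J ⟶ Yo.obj B := kernel.ι π with hjdef
    haveI hPB := hM.projective_rep B
    haveI := hP₀
    haveI := hP₁
    set b : Yo.obj B ⟶ P₀ := Projective.factorThru π q with hbdef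
    have hb : b ≫ q = π := Projective.factorThru_comp _ _
    set c : P₀ ⟶ Yo.obj B := Projective.factorThru q π with hcdef
    have hc : c ≫ π = q := Projective.factorThru_comp _ _
    set t : J ⟶ P₁ := hse.exact.lift (j ≫ b)
      (by rw [Category.assoc, hb]; exact kernel.condition π) with htdef
    have ht : t ≫ i = j ≫ b := hse.exact.lift_f _ _
    set w' : P₁ ⟶ J := kernel.lift π (i ≫ c) (by rw [Category.assoc, hc]; exact w) with hw'def
    have hw' : w' ≫ j = i ≫ c := kernel.lift_ι _ _ _
    set eY : Yo.obj B ⟶ J := kernel.lift π (𝟙 _ - b ≫ c)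
      (by rw [Preadditive.sub_comp, Category.id_comp, Category.assoc, hc, hb, sub_self]) with heYdef
    have heY : eY ≫ j = 𝟙 _ - b ≫ c := kernel.lift_ι _ _ _
    have key : t ≫ w' + j ≫ eY = 𝟙 J := by
      rw [← cancel_mono j]
      simp only [Preadditive.add_comp, Category.assoc, hw', heY, Preadditive.comp_sub, Category.comp_id,
        Category.id_comp, reassoc_of% ht]
      abel
    have hJ : Projective J := by
      constructor
      intro E X u ep hep
      haveI := hep
      obtain ⟨l₁, hl₁⟩ := hP₁.factors (w' ≫ u) ep
      obtain ⟨l₂, hl₂⟩ := hPB.factors (eY ≫ u) ep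
      refine ⟨t ≫ l₁ + j ≫ l₂, ?_⟩
      have h2 : (t ≫ l₁ + j ≫ l₂) ≫ ep = (t ≫ w' + j ≫ eY) ≫ u := by
        simp only [Preadditive.add_comp, Category.assoc, hl₁, hl₂]
      rw [h2, key, Category.id_comp]
    set a : Yo.obj A ⟶ J := kernel.lift π (Yo.map f) wπ with hadef
    have ha : a ≫ j = Yo.map f := kernel.lift_ι _ _ _
    haveI hae : Epi a := (ShortComplex.exact_iff_epi_kernel_lift _).1 hS
    haveI := hJ
    obtain ⟨σ, hσ⟩ : ∃ s : J ⟶ Yo.obj A, s ≫ a = 𝟙 J :=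
      ⟨Projective.factorThru (𝟙 J) a, Projective.factorThru_comp _ _⟩
    obtain ⟨I, ⟨φ⟩⟩ := hM.rep_of_projective J hJ
    obtain ⟨p, hp⟩ := Yo.map_surjective (a ≫ φ.hom)
    obtain ⟨m, hmm⟩ := Yo.map_surjective (φ.inv ≫ j)
    refine ⟨I, p, m, ?_, ?_, ?_⟩
    · obtain ⟨s, hs⟩ := Yo.map_surjective (φ.inv ≫ σ)
      refine IsSplitEpi.mk' ⟨s, Yo.map_injective ?_⟩
      rw [Yo.map_comp, hs, hp, Yo.map_id]
      simp [reassoc_of% hσ]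
    · haveI : Mono (Yo.map m) := by rw [hmm]; exact mono_comp _ _
      exact Yo.mono_of_mono_map this
    · refine Yo.map_injective ?_
      rw [Yo.map_comp, hp, hmm, Category.assoc, Iso.hom_inv_id_assoc, ha]
  -- (3) → (2)
  have h32 : (∀ (A B : C) (f : A ⟶ B), Nonempty (M₀ ≅ cokernel (Yo.map f)) →
        ∃ (I : C) (p : A ⟶ I) (m : I ⟶ B), IsSplitEpi p ∧ Mono m ∧ p ≫ m = f) →
      (∃ (A B : C) (f : A ⟶ B), Mono f ∧ Nonempty (M₀ ≅ cokernel (Yo.map f))) := by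
    intro h3
    obtain ⟨A, B, f, ⟨e⟩⟩ := hM.presentation M₀
    obtain ⟨I, p, m, hp, hm, hpm⟩ := h3 A B f ⟨e.symm⟩
    haveI : IsSplitEpi (Yo.map p) := IsSplitEpi.mk' (hp.exists_splitEpi.some.map Yo)
    refine ⟨I, B, m, hm, ⟨?_⟩⟩
    refine e.symm ≪≫ cokernelIsoOfEq (show Yo.map f = Yo.map p ≫ Yo.map m by
      rw [← Yo.map_comp, hpm]) ≪≫ cokernelEpiComp (Yo.map p) (Yo.map m)
  exact ⟨⟨fun h1 => h32 (h13 h1), h21⟩, ⟨h13, fun h3 => h21 (h32 h3)⟩⟩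
end

section
/- Let ℰ be an additive category, and f : E → F a morphism in ℰ which factors as f = m ∘ p with m a monomorphism. Then there is a short exact sequence 0 → coker ヨ(p) → coker ヨ(f) → coker ヨ(m) → 0 in mod(ℰ). -/
open CategoryTheory CategoryTheory.Limits

universe v u

open CategoryTheory.Abelian CategoryTheory.Abelian.Pseudoelement

universe v' u'

lemma aux_ses_of_cokernels {A : Type u'} [Category.{v'} A] [Abelian A]
    {X Y Z : A} (a : X ⟶ Y) (b : Y ⟶ Z) (c : X ⟶ Z) [Mono b] (hc : a ≫ b = c) :
    ∃ (φ : cokernel a ⟶ cokernel c) (ψ : cokernel c ⟶ cokernel b) (w : φ ≫ ψ = 0),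
      cokernel.π a ≫ φ = b ≫ cokernel.π c ∧
      cokernel.π c ≫ ψ = cokernel.π b ∧
      (ShortComplex.mk φ ψ w).ShortExact := by
  subst hc
  set φ : cokernel a ⟶ cokernel (a ≫ b) := cokernel.desc a (b ≫ cokernel.π (a ≫ b))
    (by rw [← Category.assoc, cokernel.condition]) with hφ
  set ψ : cokernel (a ≫ b) ⟶ cokernel b := cokernel.desc (a ≫ b) (cokernel.π b)
    (by rw [Category.assoc, cokernel.condition, comp_zero]) with hψ
  have hπφ : cokernel.π a ≫ φ = b ≫ cokernel.π (a ≫ b) := cokernel.π_desc _ _ _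
  have hπψ : cokernel.π (a ≫ b) ≫ ψ = cokernel.π b := cokernel.π_desc _ _ _
  have hw : φ ≫ ψ = 0 := by
    apply coequalizer.hom_ext
    rw [← Category.assoc, hπφ, Category.assoc, hπψ, cokernel.condition, comp_zero]
  refine ⟨φ, ψ, hw, hπφ, hπψ, ?_⟩
  have hab : ShortComplex.Exact (ShortComplex.mk (a ≫ b) (cokernel.π (a ≫ b))
      (cokernel.condition _)) :=
    ShortComplex.exact_of_g_is_cokernel _ (cokernelIsCokernel _)
  have hb : ShortComplex.Exact (ShortComplex.mk b (cokernel.π b)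
      (cokernel.condition _)) :=
    ShortComplex.exact_of_g_is_cokernel _ (cokernelIsCokernel _)
  have hmono : Mono φ := by
    apply mono_of_zero_of_map_zero
    intro x hx
    obtain ⟨y, rfl⟩ := pseudo_surjective_of_epi (cokernel.π a) x
    have h1 : pseudoApply (cokernel.π (a ≫ b)) (pseudoApply b y) = 0 := by
      rw [← Pseudoelement.comp_apply, ← hπφ, Pseudoelement.comp_apply]
      exact hx
    obtain ⟨u, hu⟩ := pseudo_exact_of_exact hab _ h1
    have h2 : pseudoApply b (pseudoApply a u) = pseudoApply b y := by
      rw [← Pseudoelement.comp_apply]; exact hu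
    have h3 := pseudo_injective_of_mono b h2
    rw [← h3, ← Pseudoelement.comp_apply, cokernel.condition, Pseudoelement.zero_apply]
  have hepi : Epi ψ := by
    have : Epi (cokernel.π (a ≫ b) ≫ ψ) := by rw [hπψ]; infer_instance
    exact epi_of_epi (cokernel.π (a ≫ b)) ψ
  refine ⟨?_⟩
  apply Pseudoelement.exact_of_pseudo_exact
  intro x hx
  obtain ⟨z, rfl⟩ := pseudo_surjective_of_epi (cokernel.π (a ≫ b)) x
  have h1 : pseudoApply (cokernel.π b) z = 0 := by
    rw [← hπψ, Pseudoelement.comp_apply]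
    exact hx
  obtain ⟨w', hw'⟩ := pseudo_exact_of_exact hb _ h1
  refine ⟨pseudoApply (cokernel.π a) w', ?_⟩
  rw [← Pseudoelement.comp_apply, hπφ, Pseudoelement.comp_apply, hw']

/-- Let ℰ be an additive category and `f : E ⟶ F` a morphism which factors as
`f = m ∘ p` with `m` a monomorphism.  Then, with `ヨ` the (preadditive) Yoneda embedding
into `Mod(ℰ) = Fun(ℰᵒᵖ, Ab)`, there is a short exact sequence
`0 ⟶ coker ヨ(p) ⟶ coker ヨ(f) ⟶ coker ヨ(m) ⟶ 0`, where the two maps are the canonical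
ones induced on cokernels by `m` (resp. by `p`). -/
theorem ses_of_cokernels_of_factorization
    {C : Type u} [Category.{v} C] [Preadditive C]
    {E F I : C} (f : E ⟶ F) (p : E ⟶ I) (m : I ⟶ F) (hm : Mono m) (hfac : p ≫ m = f) :
    ∃ (φ : cokernel (preadditiveYoneda.map p) ⟶ cokernel (preadditiveYoneda.map f))
      (ψ : cokernel (preadditiveYoneda.map f) ⟶ cokernel (preadditiveYoneda.map m))
      (w : φ ≫ ψ = 0),
      cokernel.π (preadditiveYoneda.map p) ≫ φ =
        preadditiveYoneda.map m ≫ cokernel.π (preadditiveYoneda.map f) ∧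
      cokernel.π (preadditiveYoneda.map f) ≫ ψ = cokernel.π (preadditiveYoneda.map m) ∧
      (ShortComplex.mk φ ψ w).ShortExact := by
  have : Mono (preadditiveYoneda.map m) := by
    rw [NatTrans.mono_iff_mono_app]
    intro X
    rw [AddCommGrpCat.mono_iff_injective]
    intro g₁ g₂ h
    have : g₁ ≫ m = g₂ ≫ m := h
    exact (cancel_mono m).1 this
  exact aux_ses_of_cokernels (preadditiveYoneda.map p) (preadditiveYoneda.map m)
    (preadditiveYoneda.map f) (by rw [← Functor.map_comp, hfac])
end

section
/- Let ℰ be a deflation-exact category with admissible kernels, and let 𝒜 be an abelian category. For a conflation-exact additive functor F : ℰ → 𝒜, the following are equivalent: (1) F commutes with kernels; (2) F maps monomorphisms to monomorphisms. -/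
open CategoryTheory CategoryTheory.Limits

universe v u v₂ u₂

/-- Let ℰ be a deflation-exact category with admissible kernels, 𝒜 an abelian category,
and `F : ℰ ⥤ 𝒜` an additive conflation-exact functor (conflations are sent to short
exact sequences).  Then `F` commutes with kernels if and only if `F` maps monomorphisms
to monomorphisms. -/
theorem conflationExact_preserves_kernels_iff_preserves_mono
    {C : Type u} [Category.{v} C] [Preadditive C]
    (S : ConflationStructure C) (hde : IsDeflationExact S) (hak : HasAdmissibleKernels S)
    {A : Type u₂} [Category.{v₂} A] [Abelian A]
    (F : C ⥤ A) (hFadd : F.Additive)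
    (hFex : ∀ {X Y Z : C} {f : X ⟶ Y} {g : Y ⟶ Z}, S.conf f g →
      ∀ (w : F.map f ≫ F.map g = 0), (ShortComplex.mk (F.map f) (F.map g) w).ShortExact) :
    -- (1) F commutes with kernels
    (∀ {K X Y : C} (k : K ⟶ X) (f : X ⟶ Y) (w : k ≫ f = 0),
      IsLimit (KernelFork.ofι k w) → ∀ (w' : F.map k ≫ F.map f = 0),
        Nonempty (IsLimit (KernelFork.ofι (F.map k) w'))) ↔
    -- (2) F preserves monomorphisms
    (∀ {X Y : C} (f : X ⟶ Y), Mono f → Mono (F.map f)) := by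
  haveI := hFadd
  constructor
  · -- (1) ⇒ (2)
    intro h1 X Y f hf
    obtain ⟨K, k, w, ⟨hklim⟩, -⟩ := hak f
    have hk0 : k = 0 := by
      rw [← cancel_mono f, w, zero_comp]
    have w' : F.map k ≫ F.map f = 0 := by
      rw [← F.map_comp, w, F.map_zero]
    obtain ⟨hFklim⟩ := h1 k f w hklim w'
    refine Preadditive.mono_of_cancel_zero _ (fun t ht => ?_)
    obtain ⟨l, hl⟩ := KernelFork.IsLimit.lift' hFklim t ht
    rw [← hl]
    simp only [Fork.ι_ofι, hk0, F.map_zero, comp_zero]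
  · -- (2) ⇒ (1)
    intro h2 K X Y k f w hklim w'
    obtain ⟨K₀, k₀, w₀, ⟨hk₀lim⟩, Z, g, hconf⟩ := hak f
    have hkg : k₀ ≫ g = 0 := S.comp_zero hconf
    obtain ⟨hcoker⟩ := S.isCokernel hconf
    -- factor f = g ≫ m
    obtain ⟨m, hm⟩ : ∃ m : Z ⟶ Y, g ≫ m = f :=
      ⟨hcoker.desc (CokernelCofork.ofπ f w₀), hcoker.fac _ WalkingParallelPair.one⟩
    -- m is mono
    have hmono : Mono m := by
      refine Preadditive.mono_of_cancel_zero _ (fun {T} t ht => ?_)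
      obtain ⟨P, p₁, p₂, hpb⟩ := hde.R2_exists g t ⟨K₀, k₀, hconf⟩
      obtain ⟨Q, q, hconf'⟩ := hde.R2_stable hpb ⟨K₀, k₀, hconf⟩
      obtain ⟨hcoker'⟩ := S.isCokernel hconf'
      have hp1f : p₁ ≫ f = 0 := by
        rw [← hm, ← Category.assoc, hpb.w, Category.assoc, ht, comp_zero]
      obtain ⟨u, hu⟩ := KernelFork.IsLimit.lift' hk₀lim p₁ hp1f
      have hpt : p₂ ≫ t = 0 := by
        rw [← hpb.w, ← hu]
        simp only [Fork.ι_ofι, Category.assoc, hkg, comp_zero]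
      exact Cofork.IsColimit.hom_ext hcoker' (by simpa using hpt)
    haveI := hmono
    haveI : Mono (F.map m) := h2 m hmono
    -- F k₀ is a kernel of F g
    have wg : F.map k₀ ≫ F.map g = 0 := by rw [← F.map_comp, hkg, F.map_zero]
    have hSE := hFex hconf wg
    haveI := hSE.mono_f
    have hFk₀g : IsLimit (KernelFork.ofι (F.map k₀) wg) := hSE.exact.fIsKernel
    -- F k₀ is a kernel of F f
    have hFf : F.map g ≫ F.map m = F.map f := by rw [← F.map_comp, hm]
    have wk₀f : F.map k₀ ≫ F.map f = 0 := by
      rw [← hFf, ← Category.assoc, wg, zero_comp]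
    have hFk₀f : IsLimit (KernelFork.ofι (F.map k₀) wk₀f) := by
      refine KernelFork.IsLimit.ofι _ _
        (fun {W'} a ha => (KernelFork.IsLimit.lift' hFk₀g a ?_).1)
        (fun {W'} a ha => (KernelFork.IsLimit.lift' hFk₀g a _).2)
        (fun {W'} a ha n hn => ?_)
      · rw [← cancel_mono (F.map m), Category.assoc, hFf, ha, zero_comp]
      · apply Fork.IsLimit.hom_ext hFk₀g
        rw [(KernelFork.IsLimit.lift' hFk₀g a _).2]
        simpa using hn
    -- compare k and k₀
    obtain ⟨l, hl⟩ := KernelFork.IsLimit.lift' hk₀lim k w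
    obtain ⟨l', hl'⟩ := KernelFork.IsLimit.lift' hklim k₀ w₀
    simp only [Fork.ι_ofι] at hl hl'
    haveI : IsIso l := by
      refine ⟨l', ?_, ?_⟩
      · apply Fork.IsLimit.hom_ext hklim
        simp [hl, hl']
      · apply Fork.IsLimit.hom_ext hk₀lim
        simp [hl, hl']
    have hFl : F.map l ≫ F.map k₀ = F.map k := by rw [← F.map_comp, hl]
    haveI : IsIso (F.map l) := inferInstance
    refine ⟨KernelFork.IsLimit.ofι _ _
      (fun {W'} a ha => (KernelFork.IsLimit.lift' hFk₀f a ha).1 ≫ inv (F.map l))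
      (fun {W'} a ha => ?_) (fun {W'} a ha n hn => ?_)⟩
    · rw [Category.assoc, ← hFl, IsIso.inv_hom_id_assoc]
      simpa using (KernelFork.IsLimit.lift' hFk₀f a ha).2
    · rw [← hFl, ← Category.assoc] at hn
      rw [IsIso.eq_comp_inv]
      apply Fork.IsLimit.hom_ext hFk₀f
      rw [(KernelFork.IsLimit.lift' hFk₀f a ha).2]
      simpa using hn
end

section
/- Let ℱ be an exact category with admissible kernels. Then Hom(E, G) = 0 for every effaceable functor E ∈ eff(ℱ) and every G ∈ mod(ℱ) of projective dimension at most one. Moreover, (eff(ℱ), mod₁(ℱ)) is a hereditary torsion pair on mod(ℱ): every M ∈ mod(ℱ) sits in a short exact sequence 0 → T → M → F → 0 with T ∈ eff(ℱ) and F ∈ mod₁(ℱ), and eff(ℱ) is closed under subobjects. -/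
open CategoryTheory CategoryTheory.Limits

universe v u v₂ u₂

/-- Axioms of an inflation-exact category (dual to deflation-exact). -/
structure IsInflationExact {C : Type u} [Category.{v} C] [Preadditive C]
    (S : ConflationStructure C) : Prop where
  L0 : ∀ X : C, ∃ (Z : C) (f : Z ⟶ X), IsZero Z ∧ S.Inflation f
  L1 : ∀ {X Y Z : C} {f : X ⟶ Y} {g : Y ⟶ Z}, S.Inflation f → S.Inflation g →
    S.Inflation (f ≫ g)
  L2_exists : ∀ {Z X T : C} (f : Z ⟶ X) (h : Z ⟶ T), S.Inflation f →
    ∃ (Q : C) (q₁ : X ⟶ Q) (q₂ : T ⟶ Q), IsPushout f h q₁ q₂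
  L2_stable : ∀ {Z X T Q : C} {f : Z ⟶ X} {h : Z ⟶ T} {q₁ : X ⟶ Q} {q₂ : T ⟶ Q},
    IsPushout f h q₁ q₂ → S.Inflation f → S.Inflation q₂

/-- `M₀ ∈ mod(ℱ)` is effaceable: it is presented by a deflation of ℱ. -/
def Effaceable {C : Type u} [Category.{v} C] [Preadditive C] (S : ConflationStructure C)
    {M : Type u₂} [Category.{v₂} M] [Abelian M] (Yo : C ⥤ M) (M₀ : M) : Prop :=
  ∃ (A B : C) (f : A ⟶ B), S.Deflation f ∧ Nonempty (cokernel (Yo.map f) ≅ M₀)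

/-- `M₀ ∈ mod(ℱ)` has projective dimension at most one. -/
def PdLeOne {M : Type u₂} [Category.{v₂} M] [Abelian M] (M₀ : M) : Prop :=
  ∃ (P₁ P₀ : M) (i : P₁ ⟶ P₀) (q : P₀ ⟶ M₀) (w : i ≫ q = 0),
    Projective P₁ ∧ Projective P₀ ∧ (ShortComplex.mk i q w).ShortExact


namespace EffAux

open CategoryTheory.Abelian CategoryTheory.Abelian.Pseudoelement

attribute [local instance] CategoryTheory.Abelian.Pseudoelement.setoid
  CategoryTheory.Abelian.Pseudoelement.objectToSort
  CategoryTheory.Abelian.Pseudoelement.homToFun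
  CategoryTheory.Over.coeFromHom

variable {M : Type u₂} [Category.{v₂} M] [Abelian M]

lemma coker_exact {X Y : M} (f : X ⟶ Y) :
    (ShortComplex.mk f (cokernel.π f) (cokernel.condition f)).Exact :=
  ShortComplex.exact_of_g_is_cokernel _ (cokernelIsCokernel f)

lemma coker_seq {X Y Z : M} (a : X ⟶ Y) (b : Y ⟶ Z) [Mono b] :
    ∃ (i : cokernel a ⟶ cokernel (a ≫ b)) (q : cokernel (a ≫ b) ⟶ cokernel b)
      (w : i ≫ q = 0), (ShortComplex.mk i q w).ShortExact := by
  refine ⟨cokernel.desc a (b ≫ cokernel.π (a ≫ b))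
      (by rw [← Category.assoc, cokernel.condition]),
    cokernel.desc (a ≫ b) (cokernel.π b)
      (by rw [Category.assoc, cokernel.condition, comp_zero]),
    ?_, ?_⟩
  · apply (cancel_epi (cokernel.π a)).1
    simp
  · set i : cokernel a ⟶ cokernel (a ≫ b) := cokernel.desc a (b ≫ cokernel.π (a ≫ b))
      (by rw [← Category.assoc, cokernel.condition]) with hi
    set q : cokernel (a ≫ b) ⟶ cokernel b := cokernel.desc (a ≫ b) (cokernel.π b)
      (by rw [Category.assoc, cokernel.condition, comp_zero]) with hq
    have hπi : cokernel.π a ≫ i = b ≫ cokernel.π (a ≫ b) := by simp [hi]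
    have hπq : cokernel.π (a ≫ b) ≫ q = cokernel.π b := by simp [hq]
    haveI hmono : Mono i := by
      apply mono_of_zero_of_map_zero
      intro t ht
      obtain ⟨y, hy⟩ := pseudo_surjective_of_epi (cokernel.π a) t
      have h1 : cokernel.π (a ≫ b) ((b : Y ⟶ Z) y) = 0 := by
        rw [← Pseudoelement.comp_apply, ← hπi, Pseudoelement.comp_apply, hy, ht]
      obtain ⟨x, hx⟩ := pseudo_exact_of_exact (coker_exact (a ≫ b)) _ h1
      have hx' : (b : Y ⟶ Z) ((a : X ⟶ Y) x) = (b : Y ⟶ Z) y := by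
        rw [← Pseudoelement.comp_apply]; exact hx
      have := pseudo_injective_of_mono b hx'
      rw [← hy, ← this, ← Pseudoelement.comp_apply, cokernel.condition, Pseudoelement.zero_apply]
    haveI hepi : Epi q := epi_of_epi_fac hπq
    have hexact : (ShortComplex.mk i q (by
        apply (cancel_epi (cokernel.π a)).1; simp [hi, hq])).Exact := by
      apply exact_of_pseudo_exact
      intro t ht
      obtain ⟨z, hz⟩ := pseudo_surjective_of_epi (cokernel.π (a ≫ b)) t
      have h1 : cokernel.π b z = 0 := by
        rw [← hπq, Pseudoelement.comp_apply, hz]; exact ht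
      obtain ⟨y, hy⟩ := pseudo_exact_of_exact (coker_exact b) _ h1
      refine ⟨cokernel.π a y, ?_⟩
      show i (cokernel.π a y) = t
      rw [← Pseudoelement.comp_apply, hπi, Pseudoelement.comp_apply, hy, hz]
    exact ⟨hexact⟩

variable {C : Type u} [Category.{v} C] [Preadditive C]

lemma part1 (S : ConflationStructure C)
    (Yo : C ⥤ M) (hM : IsModCategory Yo)
    (E G : M) (hE : Effaceable S Yo E) (hG : PdLeOne G) (φ : E ⟶ G) : φ = 0 := by
  haveI := hM.full; haveI := hM.faithful; haveI := hM.additive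
  obtain ⟨A, B, f, hf, ⟨e⟩⟩ := hE
  obtain ⟨P₁, P₀, i, q, w, hp1, hp0, hse⟩ := hG
  haveI := hse.epi_g
  haveI := hse.mono_f
  haveI := hM.projective_rep B
  set π : Yo.obj B ⟶ E := cokernel.π (Yo.map f) ≫ e.hom with hπ
  haveI : Epi π := epi_comp _ _
  set h : Yo.obj B ⟶ P₀ := Projective.factorThru (π ≫ φ) q with hh
  have hfac : h ≫ q = π ≫ φ := Projective.factorThru_comp _ _
  have hfq : (Yo.map f ≫ h) ≫ q = 0 := by
    rw [Category.assoc, hfac, hπ]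
    simp [cokernel.condition_assoc]
  obtain ⟨g, hg⟩ := KernelFork.IsLimit.lift' hse.fIsKernel (Yo.map f ≫ h) hfq
  simp only [Fork.ι_ofι] at hg
  obtain ⟨E₁, ⟨α⟩⟩ := hM.rep_of_projective P₁ hp1
  obtain ⟨E₀, ⟨β⟩⟩ := hM.rep_of_projective P₀ hp0
  set m : E₁ ⟶ E₀ := Yo.preimage (α.inv ≫ i ≫ β.hom) with hm
  have hmYo : Yo.map m = α.inv ≫ i ≫ β.hom := Yo.map_preimage _
  haveI : Mono (Yo.map m) := by rw [hmYo]; exact mono_comp _ _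
  haveI hmono : Mono m := Yo.mono_of_mono_map inferInstance
  set h'' : B ⟶ E₀ := Yo.preimage (h ≫ β.hom) with hh''
  have hh''Yo : Yo.map h'' = h ≫ β.hom := Yo.map_preimage _
  set g' : A ⟶ E₁ := Yo.preimage (g ≫ α.hom) with hg'
  have hg'Yo : Yo.map g' = g ≫ α.hom := Yo.map_preimage _
  have key : g' ≫ m = f ≫ h'' := by
    apply Yo.map_injective
    rw [Yo.map_comp, Yo.map_comp, hg'Yo, hmYo, hh''Yo]
    simp only [Category.assoc, Iso.hom_inv_id_assoc]
    rw [← Category.assoc, hg, Category.assoc]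
  obtain ⟨K, k, hconf⟩ := hf
  have hkf : k ≫ f = 0 := S.comp_zero hconf
  have hcolim := (S.isCokernel hconf).some
  haveI hfepi : Epi f := by
    have := epi_of_isColimit_cofork hcolim
    simpa using this
  have hkg' : k ≫ g' = 0 := by
    apply (cancel_mono m).1
    rw [Category.assoc, key, ← Category.assoc, hkf, zero_comp, zero_comp]
  obtain ⟨t, ht⟩ := CokernelCofork.IsColimit.desc' hcolim g' hkg'
  simp only [Cofork.π_ofπ] at ht
  have htm : t ≫ m = h'' := by
    apply (cancel_epi f).1
    rw [← Category.assoc, ht, key]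
  have hhzero : h ≫ q = 0 := by
    have h2 : h = Yo.map t ≫ α.inv ≫ i := by
      have h1 : h = Yo.map h'' ≫ β.inv := by rw [hh''Yo]; simp
      rw [h1, ← htm, Yo.map_comp, hmYo]; simp
    rw [h2, Category.assoc, Category.assoc, w, comp_zero, comp_zero]
  apply (cancel_epi π).1
  rw [← hfac, hhzero, comp_zero]

lemma part2 (S : ConflationStructure C) (hde : IsDeflationExact S)
    (hak : HasAdmissibleKernels S)
    (Yo : C ⥤ M) (hM : IsModCategory Yo) (M₀ : M) :
    ∃ (T' F' : M) (i : T' ⟶ M₀) (q : M₀ ⟶ F') (w : i ≫ q = 0),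
      Effaceable S Yo T' ∧ PdLeOne F' ∧ (ShortComplex.mk i q w).ShortExact := by
  haveI := hM.full; haveI := hM.faithful; haveI := hM.additive
  obtain ⟨A, B, f, ⟨e⟩⟩ := hM.presentation M₀
  obtain ⟨K, k, wk, ⟨hk⟩, hinfl⟩ := hak f
  obtain ⟨I, d, hconf⟩ := hinfl
  have hddef : S.Deflation d := ⟨K, k, hconf⟩
  have hcolim := (S.isCokernel hconf).some
  obtain ⟨j, hdj⟩ := CokernelCofork.IsColimit.desc' hcolim f wk
  simp only [Cofork.π_ofπ] at hdj
  obtain ⟨K', k', wk', ⟨hk'⟩, _⟩ := hak j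
  have hk'0 : k' = 0 := by
    obtain ⟨P, p₁, p₂, hpb⟩ := hde.R2_exists d k' hddef
    have hp₂ : S.Deflation p₂ := hde.R2_stable hpb hddef
    haveI : Epi p₂ := by
      obtain ⟨X, f', hc⟩ := hp₂
      have := epi_of_isColimit_cofork (S.isCokernel hc).some
      simpa using this
    have hp₁f : p₁ ≫ f = 0 := by
      rw [← hdj, ← Category.assoc, hpb.w, Category.assoc, wk', comp_zero]
    obtain ⟨u, hu⟩ := KernelFork.IsLimit.lift' hk p₁ hp₁f
    simp only [Fork.ι_ofι] at hu
    have hpk : p₂ ≫ k' = 0 := by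
      rw [← hpb.w, ← hu, Category.assoc, S.comp_zero hconf, comp_zero]
    exact (cancel_epi p₂).1 (by rw [hpk, comp_zero])
  haveI hmonoj : Mono (Yo.map j) := by
    haveI := hM.preserves_kernels j
    have hlim := isLimitForkMapOfIsLimit' Yo wk' hk'
    apply Preadditive.mono_of_cancel_zero
    intro W u hu
    obtain ⟨l, hl⟩ := KernelFork.IsLimit.lift' hlim u hu
    rw [← hl]
    simp [hk'0]
  obtain ⟨i0, q0, w0, hse0⟩ := coker_seq (Yo.map d) (Yo.map j)
  have hcomp : Yo.map d ≫ Yo.map j = Yo.map f := by rw [← Yo.map_comp, hdj]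
  set e2 : cokernel (Yo.map d ≫ Yo.map j) ≅ M₀ := cokernelIsoOfEq hcomp ≪≫ e with he2
  refine ⟨cokernel (Yo.map d), cokernel (Yo.map j), i0 ≫ e2.hom, e2.inv ≫ q0,
    by rw [Category.assoc, Iso.hom_inv_id_assoc, w0], ?_, ?_, ?_⟩
  · exact ⟨A, I, d, hddef, ⟨Iso.refl _⟩⟩
  · exact ⟨Yo.obj I, Yo.obj B, Yo.map j, cokernel.π (Yo.map j), cokernel.condition _,
      hM.projective_rep I, hM.projective_rep B, ⟨coker_exact (Yo.map j)⟩⟩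
  · refine ShortComplex.shortExact_of_iso ?_ hse0
    exact ShortComplex.isoMk (Iso.refl _) e2 (Iso.refl _) (by simp) (by simp)

lemma part3 (S : ConflationStructure C) (hde : IsDeflationExact S)
    (Yo : C ⥤ M) (hM : IsModCategory Yo)
    {N E : M} (ι : N ⟶ E) (hι : Mono ι) (hE : Effaceable S Yo E) :
    Effaceable S Yo N := by
  haveI := hM.full; haveI := hM.faithful; haveI := hM.additive
  haveI := hι
  obtain ⟨A, B, f, hf, ⟨e⟩⟩ := hE
  obtain ⟨A', B', g, ⟨e'⟩⟩ := hM.presentation N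
  set π : Yo.obj B ⟶ E := cokernel.π (Yo.map f) ≫ e.hom with hπ
  set π' : Yo.obj B' ⟶ N := cokernel.π (Yo.map g) ≫ e'.hom with hπ'
  haveI : Epi π := epi_comp _ _
  haveI : Epi π' := epi_comp _ _
  haveI := hM.projective_rep B'
  set h : Yo.obj B' ⟶ Yo.obj B := Projective.factorThru (π' ≫ ι) π with hh
  have hfac : h ≫ π = π' ≫ ι := Projective.factorThru_comp _ _
  set h' : B' ⟶ B := Yo.preimage h with hh'
  have hh'Yo : Yo.map h' = h := Yo.map_preimage _
  obtain ⟨P, p₁, p₂, hpb⟩ := hde.R2_exists f h' hf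
  have hp₂ : S.Deflation p₂ := hde.R2_stable hpb hf
  have hz : Yo.map p₂ ≫ π' = 0 := by
    rw [← cancel_mono ι, Category.assoc, ← hfac, zero_comp]
    rw [← hh'Yo, ← Category.assoc, ← Yo.map_comp, ← hpb.w, Yo.map_comp, hπ]
    simp [cokernel.condition_assoc]
  have hexact : (ShortComplex.mk (Yo.map p₂) π' hz).Exact := by
    apply exact_of_pseudo_exact
    intro b hb
    obtain ⟨b₀, rfl⟩ := Quotient.exists_rep b
    rw [show (ShortComplex.mk (Yo.map p₂) π' hz).g = π' from rfl] at hb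
    rw [pseudoApply_mk'] at hb
    have hb' : b₀.hom ≫ π' = 0 := (pseudoZero_iff _).1 hb
    obtain ⟨D₁, D, t, ⟨et⟩⟩ := hM.presentation b₀.left
    set ρ : Yo.obj D ⟶ b₀.left := cokernel.π (Yo.map t) ≫ et.hom with hρ
    haveI : Epi ρ := epi_comp _ _
    haveI := hM.projective_rep D
    set u' : D ⟶ B' := Yo.preimage (ρ ≫ b₀.hom) with hu'
    have hu'Yo : Yo.map u' = ρ ≫ b₀.hom := Yo.map_preimage _
    have hx : (Yo.map (u' ≫ h')) ≫ cokernel.π (Yo.map f) = 0 := by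
      rw [← cancel_mono e.hom, Category.assoc, ← hπ, zero_comp]
      rw [Yo.map_comp, hu'Yo, hh'Yo, Category.assoc, Category.assoc, hfac]
      rw [reassoc_of% hb']
      simp
    have hexactf := coker_exact (Yo.map f)
    set v : Yo.obj D ⟶ Yo.obj A := hexactf.liftFromProjective (Yo.map (u' ≫ h')) hx with hv
    have hvf : v ≫ Yo.map f = Yo.map (u' ≫ h') :=
      hexactf.liftFromProjective_comp (Yo.map (u' ≫ h')) hx
    set v' : D ⟶ A := Yo.preimage v with hv'
    have hcomm : v' ≫ f = u' ≫ h' := by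
      apply Yo.map_injective
      rw [Yo.map_comp, Yo.map_preimage, hvf]
    set w0 : D ⟶ P := hpb.lift v' u' hcomm with hw0
    have hw0snd : w0 ≫ p₂ = u' := hpb.lift_snd v' u' hcomm
    refine ⟨Quotient.mk _ (Over.mk (Yo.map w0)), ?_⟩
    rw [show (ShortComplex.mk (Yo.map p₂) π' hz).f = Yo.map p₂ from rfl]
    rw [show (Quotient.mk _ (Over.mk (Yo.map w0)) : Pseudoelement (Yo.obj P)) =
      ⟦Over.mk (Yo.map w0)⟧ from rfl]
    rw [pseudoApply_mk']
    apply Quotient.sound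
    refine ⟨Yo.obj D, 𝟙 _, ρ, inferInstance, inferInstance, ?_⟩
    show 𝟙 _ ≫ ((Over.mk (Yo.map w0)).hom ≫ Yo.map p₂) = ρ ≫ b₀.hom
    rw [Category.id_comp]
    show Yo.map w0 ≫ Yo.map p₂ = ρ ≫ b₀.hom
    rw [← Yo.map_comp, hw0snd, hu'Yo]
  haveI : Epi (ShortComplex.mk (Yo.map p₂) π' hz).g := ‹Epi π'›
  exact ⟨P, B', p₂, hp₂, ⟨IsColimit.coconePointUniqueUpToIso
    (cokernelIsCokernel (Yo.map p₂)) hexact.gIsCokernel⟩⟩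

end EffAux

/-- Let ℱ be an exact category with admissible kernels.  Then `Hom(E, G) = 0` for every
effaceable `E` and every `G` of projective dimension at most one; moreover
`(eff(ℱ), mod₁(ℱ))` is a hereditary torsion pair on `mod(ℱ)`: every object sits in a
short exact sequence with effaceable subobject and torsionfree quotient of projective
dimension at most one, and the effaceable objects are closed under subobjects. -/
theorem effaceable_pdLeOne_hereditary_torsion_pair
    {C : Type u} [Category.{v} C] [Preadditive C]
    (S : ConflationStructure C) (hde : IsDeflationExact S) (hie : IsInflationExact S)
    (hak : HasAdmissibleKernels S)
    {M : Type u₂} [Category.{v₂} M] [Abelian M] (Yo : C ⥤ M) (hM : IsModCategory Yo) :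
    -- Hom(eff, mod₁) = 0
    (∀ (E G : M), Effaceable S Yo E → PdLeOne G → ∀ φ : E ⟶ G, φ = 0) ∧
    -- torsion decomposition
    (∀ M₀ : M, ∃ (T' F' : M) (i : T' ⟶ M₀) (q : M₀ ⟶ F') (w : i ≫ q = 0),
      Effaceable S Yo T' ∧ PdLeOne F' ∧ (ShortComplex.mk i q w).ShortExact) ∧
    -- heredity: eff is closed under subobjects
    (∀ {N E : M} (ι : N ⟶ E), Mono ι → Effaceable S Yo E → Effaceable S Yo N) := by
  exact ⟨fun E G hE hG φ => EffAux.part1 S Yo hM E G hE hG φ,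
    fun M₀ => EffAux.part2 S hde hak Yo hM M₀,
    fun ι hι hE => EffAux.part3 S hde Yo hM ι hι hE⟩
end

section
/- Let ℰ be a deflation-exact category satisfying the obscure axiom R3, with kernels. Then the subcategory eff(ℰ) of effaceable functors is a Serre subcategory of the abelian category mod(ℰ): it is closed under subobjects, quotients, and extensions. -/
open CategoryTheory CategoryTheory.Limits

universe v u v₂ u₂

/-- Quillen's obscure axiom R3: if `p ∘ i` is a deflation and `p` has a kernel, then `p`
is a deflation. -/
def AxiomR3 {C : Type u} [Category.{v} C] [Preadditive C] (S : ConflationStructure C) : Prop :=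
  ∀ {A B Z : C} (i : A ⟶ B) (p : B ⟶ Z), HasKernel p → S.Deflation (i ≫ p) → S.Deflation p

namespace EffSerre

section AbelianHelpers

variable {M : Type u₂} [Category.{v₂} M] [Abelian M]

/-- If `e : cokernel f ≅ T`, then `cokernel.π f ≫ e.hom` is a cokernel of `f`. -/
noncomputable def isColimitCoforkCompIso {X Y T : M} (f : X ⟶ Y) (e : cokernel f ≅ T) :
    IsColimit (CokernelCofork.ofπ (cokernel.π f ≫ e.hom)
      (by rw [← Category.assoc, cokernel.condition, zero_comp])) := by
  have : Epi (cokernel.π f ≫ e.hom) := epi_comp _ _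
  exact CokernelCofork.IsColimit.ofπ' _ _ (fun k hk =>
    ⟨e.inv ≫ cokernel.desc f k hk, by simp⟩)

/-- From an `IsColimit` cokernel cofork, get an iso with the abstract cokernel. -/
noncomputable def cokernelIsoOfIsColimit {X Y T : M} {f : X ⟶ Y} {π : Y ⟶ T} {w : f ≫ π = 0}
    (h : IsColimit (CokernelCofork.ofπ π w)) : cokernel f ≅ T :=
  IsColimit.coconePointUniqueUpToIso (cokernelIsCokernel f) h

/-- L1: quotient lemma. -/
noncomputable def isColimitQuotient {X₁ X₂ X₃ Q N K : M} (u : X₁ ⟶ X₂) (c : X₂ ⟶ Q)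
    {w : u ≫ c = 0} (hc : IsColimit (CokernelCofork.ofπ c w)) (q : Q ⟶ N) [Epi q]
    (ι : K ⟶ Q) {wι : ι ≫ q = 0} (hι : IsLimit (KernelFork.ofι ι wι))
    (ρ : X₃ ⟶ K) [Epi ρ] (s : X₃ ⟶ X₂) (hs : s ≫ c = ρ ≫ ι) :
    IsColimit (CokernelCofork.ofπ (c ≫ q)
      (by
        apply biprod.hom_ext' <;> simp only [biprod.inl_desc_assoc, biprod.inr_desc_assoc,
          comp_zero]
        · rw [← Category.assoc, w, zero_comp]
        · rw [← Category.assoc, hs, Category.assoc, wι, comp_zero]) :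
      CokernelCofork (biprod.desc u s)) := by
  have hcq : Epi (c ≫ q) := by
    have : Epi c := epi_of_isColimit_cofork hc
    exact epi_comp _ _
  have hqcoker : IsColimit (CokernelCofork.ofπ q (by exact wι) : CokernelCofork ι) :=
    Abelian.epiIsCokernelOfKernel _ hι
  exact CokernelCofork.IsColimit.ofπ' _ _ (fun k hk => by
    have hu : u ≫ k = 0 := by simpa using biprod.inl ≫= hk
    have hsk : s ≫ k = 0 := by simpa using biprod.inr ≫= hk
    obtain ⟨h', hh'⟩ := CokernelCofork.IsColimit.desc' hc k hu
    dsimp at hh'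
    have hιh' : ι ≫ h' = 0 := by
      have : ρ ≫ ι ≫ h' = 0 := by
        rw [← Category.assoc, ← hs, Category.assoc, hh', hsk]
      rwa [← cancel_epi ρ, comp_zero]
    obtain ⟨h'', hh''⟩ := CokernelCofork.IsColimit.desc' hqcoker h' hιh'
    dsimp at hh''
    exact ⟨h'', by rw [Category.assoc, hh'', hh']⟩)

open CategoryTheory.Abelian in
open Pseudoelement in
/-- L2: subobject lemma. -/
noncomputable def isColimitSub {X₁ X₂ X₃ Q N P : M} {u : X₁ ⟶ X₂} {c : X₂ ⟶ Q}
    {w : u ≫ c = 0} (hc : IsColimit (CokernelCofork.ofπ c w))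
    {p₁ : P ⟶ X₁} {p₂ : P ⟶ X₃} {s : X₃ ⟶ X₂} (hpb : IsPullback p₁ p₂ u s)
    (ι : N ⟶ Q) [Mono ι] (ρ : X₃ ⟶ N) [Epi ρ] (hs : s ≫ c = ρ ≫ ι)
    (wρ : p₂ ≫ ρ = 0) :
    IsColimit (CokernelCofork.ofπ ρ wρ : CokernelCofork p₂) := by
  have hexact1 : (ShortComplex.mk u c w).Exact := ShortComplex.exact_of_g_is_cokernel _ hc
  have hS : (ShortComplex.mk p₂ ρ wρ).Exact := by
    apply Pseudoelement.exact_of_pseudo_exact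
    intro x hx
    have hcs : pseudoApply c (pseudoApply s x) = 0 := by
      rw [← Pseudoelement.comp_apply, hs, Pseudoelement.comp_apply, hx,
        Pseudoelement.apply_zero]
    obtain ⟨x₁, hx₁⟩ := Pseudoelement.pseudo_exact_of_exact hexact1 _ hcs
    obtain ⟨r, hr₁, hr₂⟩ := Pseudoelement.pseudo_pullback (f := u) (g := s)
      (p := x₁) (q := x) hx₁
    refine ⟨pseudoApply hpb.isoPullback.inv r, ?_⟩
    have h2 : hpb.isoPullback.inv ≫ p₂ = pullback.snd u s := by
      rw [Iso.inv_comp_eq, hpb.isoPullback_hom_snd]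
    rw [← Pseudoelement.comp_apply, h2, hr₂]
  exact hS.gIsCokernel

open CategoryTheory.Abelian in
open Pseudoelement in
/-- L3: extension lemma (Horseshoe-type). -/
noncomputable def isColimitExt {RA PA A RZ PZ Z B : M}
    (i : A ⟶ B) (q : B ⟶ Z) (wiq : i ≫ q = 0)
    (hse : (ShortComplex.mk i q wiq).ShortExact)
    (a : RA ⟶ PA) (cA : PA ⟶ A) (wa : a ≫ cA = 0)
    (hcA : IsColimit (CokernelCofork.ofπ cA wa))
    (z : RZ ⟶ PZ) (cZ : PZ ⟶ Z) (wz : z ≫ cZ = 0)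
    (hcZ : IsColimit (CokernelCofork.ofπ cZ wz))
    (t₂ : PZ ⟶ B) (ht₂ : t₂ ≫ q = cZ)
    (θ : RZ ⟶ PA) (hθ : θ ≫ (cA ≫ i) + z ≫ t₂ = 0)
    (wGt : (biprod.desc (a ≫ biprod.inl) (θ ≫ biprod.inl + z ≫ biprod.inr) :
        RA ⊞ RZ ⟶ PA ⊞ PZ) ≫ biprod.desc (cA ≫ i) t₂ = 0) :
    IsColimit (CokernelCofork.ofπ (biprod.desc (cA ≫ i) t₂) wGt) := by
  haveI : Mono i := hse.mono_f
  haveI : Epi q := hse.epi_g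
  haveI : Epi cA := epi_of_isColimit_cofork hcA
  haveI : Epi cZ := epi_of_isColimit_cofork hcZ
  have hqcoker := hse.gIsCokernel
  set G : RA ⊞ RZ ⟶ PA ⊞ PZ :=
    biprod.desc (a ≫ biprod.inl) (θ ≫ biprod.inl + z ≫ biprod.inr) with hG
  set t : PA ⊞ PZ ⟶ B := biprod.desc (cA ≫ i) t₂ with ht
  haveI hepit : Epi t := by
    refine Preadditive.epi_of_cancel_zero _ (fun {T} h hh => ?_)
    have h1 : cA ≫ i ≫ h = 0 := by
      have := biprod.inl ≫= hh
      simpa [ht] using this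
    have h2 : i ≫ h = 0 := (cancel_epi cA).1 (by rw [comp_zero]; exact h1)
    obtain ⟨h', hh'⟩ := CokernelCofork.IsColimit.desc' hqcoker h h2
    dsimp at hh'
    have h3 : t₂ ≫ h = 0 := by
      have := biprod.inr ≫= hh
      simpa [ht] using this
    have h4 : cZ ≫ h' = 0 := by rw [← ht₂, Category.assoc, hh']; exact h3
    have h5 : h' = 0 := (cancel_epi cZ).1 (by rw [comp_zero]; exact h4)
    rw [← hh', h5, comp_zero]
  have hαw : (a ≫ biprod.inl) ≫ t = 0 := by
    rw [ht, Category.assoc, biprod.inl_desc, ← Category.assoc, wa, zero_comp]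
  have hβw : (θ ≫ biprod.inl + z ≫ biprod.inr) ≫ t = 0 := by
    rw [ht, Preadditive.add_comp, Category.assoc, Category.assoc, biprod.inl_desc,
      biprod.inr_desc]
    exact hθ
  set α : RA ⟶ kernel t := kernel.lift t (a ≫ biprod.inl) hαw with hα
  set β : RZ ⟶ kernel t := kernel.lift t (θ ≫ biprod.inl + z ≫ biprod.inr) hβw with hβ
  have hliftG : kernel.lift t G wGt = biprod.desc α β := by
    rw [← cancel_mono (kernel.ι t)]
    apply biprod.hom_ext' <;>
      simp [hα, hβ, hG]
  have hsplit : (ShortComplex.mk (biprod.inl : PA ⟶ PA ⊞ PZ) biprod.snd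
      biprod.inl_snd).Exact := by
    exact (ShortComplex.Splitting.mk (r := biprod.fst) (s := biprod.inr)
      (f_r := biprod.inl_fst) (s_g := biprod.inr_snd) (id := biprod.total)).exact
  have hexactA : (ShortComplex.mk a cA wa).Exact := ShortComplex.exact_of_g_is_cokernel _ hcA
  have hexactZ : (ShortComplex.mk z cZ wz).Exact := ShortComplex.exact_of_g_is_cokernel _ hcZ
  haveI hepi : Epi (biprod.desc α β) := by
    refine Preadditive.epi_of_cancel_zero _ (fun {T} h hh => ?_)
    have hαh : α ≫ h = 0 := by
      have := biprod.inl ≫= hh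
      simpa using this
    have hβh : β ≫ h = 0 := by
      have := biprod.inr ≫= hh
      simpa using this
    apply Pseudoelement.zero_morphism_ext
    intro k
    have e1 : (kernel.ι t ≫ biprod.snd) ≫ cZ = 0 := by
      have : t ≫ q = biprod.snd ≫ cZ := by
        rw [ht]; apply biprod.hom_ext' <;> simp [ht₂]
        rw [wiq, comp_zero]
      rw [Category.assoc, ← this, ← Category.assoc, kernel.condition, zero_comp]
    have e2 : pseudoApply cZ (pseudoApply (kernel.ι t ≫ biprod.snd) k) = 0 := by
      rw [← Pseudoelement.comp_apply, e1, Pseudoelement.zero_apply]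
    obtain ⟨rZ, hrZ⟩ := Pseudoelement.pseudo_exact_of_exact hexactZ _ e2
    have e3 : pseudoApply (kernel.ι t ≫ biprod.snd) k
        = pseudoApply (kernel.ι t ≫ biprod.snd) (pseudoApply β rZ) := by
      rw [← Pseudoelement.comp_apply, hβ]
      have hcmp : kernel.lift t (θ ≫ biprod.inl + z ≫ biprod.inr) hβw ≫
          kernel.ι t ≫ biprod.snd = z := by
        rw [← Category.assoc, kernel.lift_ι, Preadditive.add_comp, Category.assoc,
          Category.assoc, biprod.inl_snd, biprod.inr_snd, comp_zero, zero_add,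
          Category.comp_id]
      rw [hcmp, hrZ]
    obtain ⟨dif, hdif0, hdifP⟩ :=
      Pseudoelement.sub_of_eq_image (kernel.ι t ≫ biprod.snd) k (pseudoApply β rZ) e3
    have e4 : pseudoApply (biprod.snd : PA ⊞ PZ ⟶ PZ) (pseudoApply (kernel.ι t) dif) = 0 := by
      rw [← Pseudoelement.comp_apply]; exact hdif0
    obtain ⟨xA, hxA⟩ := Pseudoelement.pseudo_exact_of_exact hsplit _ e4
    have e5 : pseudoApply i (pseudoApply cA xA) = 0 := by
      rw [← Pseudoelement.comp_apply]
      have hcmp : (cA ≫ i) = biprod.inl ≫ t := by rw [ht, biprod.inl_desc]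
      rw [hcmp, Pseudoelement.comp_apply, hxA, ← Pseudoelement.comp_apply,
        kernel.condition, Pseudoelement.zero_apply]
    have e6 : pseudoApply cA xA = 0 :=
      Pseudoelement.zero_of_map_zero _ (Pseudoelement.pseudo_injective_of_mono i) _ e5
    obtain ⟨rA, hrA⟩ := Pseudoelement.pseudo_exact_of_exact hexactA _ e6
    have e7 : pseudoApply (kernel.ι t) (pseudoApply α rA) = pseudoApply (kernel.ι t) dif := by
      rw [← Pseudoelement.comp_apply, hα, kernel.lift_ι, Pseudoelement.comp_apply, hrA, hxA]
    have e8 : pseudoApply α rA = dif :=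
      Pseudoelement.pseudo_injective_of_mono (kernel.ι t) e7
    have e9 : pseudoApply h dif = pseudoApply h k := by
      apply hdifP
      rw [← Pseudoelement.comp_apply, hβh, Pseudoelement.zero_apply]
    rw [← e9, ← e8, ← Pseudoelement.comp_apply, hαh, Pseudoelement.zero_apply]
  have hexact : (ShortComplex.mk G t wGt).Exact := by
    rw [ShortComplex.exact_iff_epi_kernel_lift]
    show Epi (kernel.lift t G wGt)
    rw [hliftG]; exact hepi
  exact hexact.gIsCokernel

/-- `X₁ ⊞ W` (conjugated) is a pullback of `u : X₁ ⟶ X₂` along the first projection. -/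
lemma isPullback_biprod_fst {V₁ V₂ X₁ X₂ W : M} (u : X₁ ⟶ X₂)
    (e₁ : V₁ ≅ X₁ ⊞ W) (e₂ : V₂ ≅ X₂ ⊞ W) :
    IsPullback (e₁.hom ≫ biprod.fst) (e₁.hom ≫ biprod.map u (𝟙 W) ≫ e₂.inv) u
      (e₂.hom ≫ biprod.fst) := by
  have comm : (e₁.hom ≫ biprod.fst) ≫ u
      = (e₁.hom ≫ biprod.map u (𝟙 W) ≫ e₂.inv) ≫ (e₂.hom ≫ biprod.fst) := by
    simp
  refine ⟨⟨comm⟩, ⟨PullbackCone.IsLimit.mk comm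
    (fun sc => biprod.lift sc.fst (sc.snd ≫ e₂.hom ≫ biprod.snd) ≫ e₁.inv)
    (fun sc => by simp)
    (fun sc => ?_) (fun sc m hm1 hm2 => ?_)⟩⟩
  · rw [Category.assoc, Iso.inv_hom_id_assoc, ← Category.assoc, Iso.comp_inv_eq]
    apply biprod.hom_ext
    · simp only [Category.assoc, biprod.map_fst, biprod.lift_fst_assoc]
      rw [sc.condition]
    · simp
  · rw [Iso.eq_comp_inv]
    apply biprod.hom_ext
    · rw [Category.assoc, biprod.lift_fst, ← hm1]
    · rw [Category.assoc, biprod.lift_snd, ← hm2]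
      have h1 : m ≫ e₁.hom ≫ biprod.map u (𝟙 W) ≫ e₂.inv ≫ e₂.hom ≫ biprod.snd
          = m ≫ e₁.hom ≫ biprod.snd := by
        rw [Iso.inv_hom_id_assoc, biprod.map_snd, Category.comp_id]
      simpa [Category.assoc] using h1.symm
/-- `W ⊞ X₁` (conjugated) is a pullback of `u : X₁ ⟶ X₂` along the second projection. -/
lemma isPullback_biprod_snd {V₁ V₂ X₁ X₂ W : M} (u : X₁ ⟶ X₂)
    (e₁ : V₁ ≅ W ⊞ X₁) (e₂ : V₂ ≅ W ⊞ X₂) :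
    IsPullback (e₁.hom ≫ biprod.snd) (e₁.hom ≫ biprod.map (𝟙 W) u ≫ e₂.inv) u
      (e₂.hom ≫ biprod.snd) := by
  have comm : (e₁.hom ≫ biprod.snd) ≫ u
      = (e₁.hom ≫ biprod.map (𝟙 W) u ≫ e₂.inv) ≫ (e₂.hom ≫ biprod.snd) := by
    simp
  refine ⟨⟨comm⟩, ⟨PullbackCone.IsLimit.mk comm
    (fun sc => biprod.lift (sc.snd ≫ e₂.hom ≫ biprod.fst) sc.fst ≫ e₁.inv)
    (fun sc => by simp)
    (fun sc => ?_) (fun sc m hm1 hm2 => ?_)⟩⟩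
  · rw [Category.assoc, Iso.inv_hom_id_assoc, ← Category.assoc, Iso.comp_inv_eq]
    apply biprod.hom_ext
    · simp
    · simp only [Category.assoc, biprod.map_snd, biprod.lift_snd_assoc]
      rw [sc.condition]
  · rw [Iso.eq_comp_inv]
    apply biprod.hom_ext
    · rw [Category.assoc, biprod.lift_fst, ← hm2]
      have h1 : m ≫ e₁.hom ≫ biprod.map (𝟙 W) u ≫ e₂.inv ≫ e₂.hom ≫ biprod.fst
          = m ≫ e₁.hom ≫ biprod.fst := by
        rw [Iso.inv_hom_id_assoc, biprod.map_fst, Category.comp_id]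
      simpa [Category.assoc] using h1.symm
    · rw [Category.assoc, biprod.lift_snd, ← hm1]

end AbelianHelpers

section CHelpers

variable {C : Type u} [Category.{v} C] [Preadditive C]

/-- Deflations are closed under precomposition with isomorphisms. -/
lemma deflation_iso_comp (S : ConflationStructure C)
    {Y Y' Z : C} (e : Y' ≅ Y) {d : Y ⟶ Z} (hd : S.Deflation d) : S.Deflation (e.hom ≫ d) := by
  obtain ⟨X, k, hk⟩ := hd
  refine ⟨X, k ≫ e.inv, ?_⟩
  have := S.iso_closed (Iso.refl X) e.symm (Iso.refl Z) hk
  simpa using this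

variable {M : Type u₂} [Category.{v₂} M] [Abelian M] (Yo : C ⥤ M)

/-- Fully faithful functors reflect pullbacks. -/
lemma isPullback_of_map_isPullback [Yo.Full] [Yo.Faithful]
    {P X Y Z : C} {p₁ : P ⟶ X} {p₂ : P ⟶ Y} {f : X ⟶ Z} {g : Y ⟶ Z}
    (h : IsPullback (Yo.map p₁) (Yo.map p₂) (Yo.map f) (Yo.map g)) :
    IsPullback p₁ p₂ f g := by
  have comm : p₁ ≫ f = p₂ ≫ g := Yo.map_injective (by
    rw [Yo.map_comp, Yo.map_comp]; exact h.w)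
  refine ⟨⟨comm⟩, ⟨PullbackCone.IsLimit.mk comm
    (fun s => Yo.preimage (h.lift (Yo.map s.fst) (Yo.map s.snd)
      (by rw [← Yo.map_comp, ← Yo.map_comp, s.condition])))
    (fun s => Yo.map_injective (by rw [Yo.map_comp, Yo.map_preimage, h.lift_fst]))
    (fun s => Yo.map_injective (by rw [Yo.map_comp, Yo.map_preimage, h.lift_snd]))
    (fun s m hm1 hm2 => Yo.map_injective ?_)⟩⟩
  rw [Yo.map_preimage]
  apply h.hom_ext
  · rw [h.lift_fst, ← Yo.map_comp, hm1]
  · rw [h.lift_snd, ← Yo.map_comp, hm2]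

variable (hM : IsModCategory Yo)
include hM

/-- There is a "surrogate biproduct" in `C`, via representability of projectives. -/
lemma exists_surrogate (X Y : C) :
    ∃ (E : C), Nonempty (Yo.obj E ≅ Yo.obj X ⊞ Yo.obj Y) := by
  haveI := hM.projective_rep X
  haveI := hM.projective_rep Y
  obtain ⟨E, ⟨e⟩⟩ := hM.rep_of_projective (Yo.obj X ⊞ Yo.obj Y) inferInstance
  exact ⟨E, ⟨e.symm⟩⟩

/-- Every object of `M` admits an epimorphism from a representable. -/
lemma exists_epi_rep (M₀ : M) :
    ∃ (Y : C) (ρ : Yo.obj Y ⟶ M₀), Epi ρ := by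
  obtain ⟨A, B, f, ⟨e⟩⟩ := hM.presentation M₀
  exact ⟨B, cokernel.π _ ≫ e.hom, epi_comp _ _⟩

/-- `Yo` preserves pullbacks. -/
lemma map_isPullback {P A Y B : C}
    {p₁ : P ⟶ A} {p₂ : P ⟶ Y} {f : A ⟶ B} {σ : Y ⟶ B}
    (hpb : IsPullback p₁ p₂ f σ) :
    IsPullback (Yo.map p₁) (Yo.map p₂) (Yo.map f) (Yo.map σ) := by
  haveI := hM.full
  haveI := hM.faithful
  haveI := hM.additive
  obtain ⟨E, ⟨e⟩⟩ := exists_surrogate Yo hM A Y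
  set u : Yo.obj A ⟶ Yo.obj B := Yo.map f with hu
  set s : Yo.obj Y ⟶ Yo.obj B := Yo.map σ with hs
  set dM : Yo.obj E ⟶ Yo.obj B := e.hom ≫ biprod.desc u (-s) with hdM
  set d : E ⟶ B := Yo.preimage dM with hd
  have hYd : Yo.map d = dM := Yo.map_preimage dM
  set kM : Yo.obj P ⟶ Yo.obj E := biprod.lift (Yo.map p₁) (Yo.map p₂) ≫ e.inv with hkM
  set k : P ⟶ E := Yo.preimage kM with hk
  have hYk : Yo.map k = kM := Yo.map_preimage kM
  have hcomm : Yo.map p₁ ≫ u = Yo.map p₂ ≫ s := by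
    rw [hu, hs, ← Yo.map_comp, ← Yo.map_comp, hpb.w]
  have hkd0 : kM ≫ dM = 0 := by
    rw [hkM, hdM, Category.assoc, Iso.inv_hom_id_assoc, biprod.lift_desc,
      Preadditive.comp_neg, hcomm, add_neg_cancel]
  have hkd : k ≫ d = 0 := Yo.map_injective (by
    rw [Yo.map_comp, hYk, hYd, hkd0, Functor.map_zero])
  -- key computation in M
  have key : ∀ {T : M} (m : T ⟶ Yo.obj A ⊞ Yo.obj Y), m ≫ biprod.desc u (-s) = 0 →
      (m ≫ biprod.fst) ≫ u = (m ≫ biprod.snd) ≫ s := by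
    intro T m hm
    have hm' : m = biprod.lift (m ≫ biprod.fst) (m ≫ biprod.snd) := by
      apply biprod.hom_ext <;> simp
    rw [hm', biprod.lift_desc, Preadditive.comp_neg, ← sub_eq_add_neg,
      sub_eq_zero] at hm
    simpa using hm
  -- k is a kernel of d in C
  have hkerC : IsLimit (KernelFork.ofι k hkd) := by
    refine KernelFork.IsLimit.ofι _ _
      (fun {T} t' ht' => hpb.lift (Yo.preimage (Yo.map t' ≫ e.hom ≫ biprod.fst))
        (Yo.preimage (Yo.map t' ≫ e.hom ≫ biprod.snd)) (Yo.map_injective ?_))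
      (fun {T} t' ht' => Yo.map_injective ?_) (fun {T} t' ht' m hm => ?_)
    · rw [Yo.map_comp, Yo.map_comp, Yo.map_preimage, Yo.map_preimage]
      have h0 : (Yo.map t' ≫ e.hom) ≫ biprod.desc u (-s) = 0 := by
        have := Yo.congr_map ht'
        rw [Yo.map_comp, hYd, Functor.map_zero, hdM] at this
        rw [← Category.assoc] at this; exact this
      have := key (Yo.map t' ≫ e.hom) h0
      simpa [Category.assoc] using this
    · -- fac
      rw [Yo.map_comp, hYk, hkM, ← Category.assoc, Iso.comp_inv_eq]
      apply biprod.hom_ext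
      · rw [Category.assoc, biprod.lift_fst, ← Yo.map_comp, IsPullback.lift_fst,
          Yo.map_preimage, Category.assoc]
      · rw [Category.assoc, biprod.lift_snd, ← Yo.map_comp, IsPullback.lift_snd,
          Yo.map_preimage, Category.assoc]
    · -- uniq
      apply hpb.hom_ext
      · rw [IsPullback.lift_fst]
        apply Yo.map_injective
        rw [Yo.map_comp, Yo.map_preimage]
        have : Yo.map p₁ = kM ≫ e.hom ≫ biprod.fst := by
          rw [hkM, Category.assoc, Iso.inv_hom_id_assoc, biprod.lift_fst]
        rw [this, ← hYk, ← Category.assoc, ← Yo.map_comp, hm]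
      · rw [IsPullback.lift_snd]
        apply Yo.map_injective
        rw [Yo.map_comp, Yo.map_preimage]
        have : Yo.map p₂ = kM ≫ e.hom ≫ biprod.snd := by
          rw [hkM, Category.assoc, Iso.inv_hom_id_assoc, biprod.lift_snd]
        rw [this, ← hYk, ← Category.assoc, ← Yo.map_comp, hm]
  -- Yo maps it to a kernel in M
  haveI := hM.preserves_kernels d
  have hkerM : IsLimit ((KernelFork.ofι k hkd).map Yo) :=
    KernelFork.mapIsLimit _ hkerC Yo
  -- now build the pullback in M
  haveI mono_kM : Mono (Yo.map k) := by
    have := mono_of_isLimit_fork hkerM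
    exact this
  have hp₁ : Yo.map p₁ = Yo.map k ≫ e.hom ≫ biprod.fst := by
    rw [hYk, hkM, Category.assoc, Iso.inv_hom_id_assoc, biprod.lift_fst]
  have hp₂ : Yo.map p₂ = Yo.map k ≫ e.hom ≫ biprod.snd := by
    rw [hYk, hkM, Category.assoc, Iso.inv_hom_id_assoc, biprod.lift_snd]
  have hlift : ∀ sc : PullbackCone u s, ∃ l : sc.pt ⟶ Yo.obj P,
      l ≫ Yo.map p₁ = sc.fst ∧ l ≫ Yo.map p₂ = sc.snd := by
    intro sc
    have wlM : (biprod.lift sc.fst sc.snd ≫ e.inv) ≫ Yo.map d = 0 := by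
      rw [hYd, hdM, Category.assoc, Iso.inv_hom_id_assoc, biprod.lift_desc,
        Preadditive.comp_neg, sc.condition, add_neg_cancel]
    obtain ⟨l, hl⟩ := KernelFork.IsLimit.lift' hkerM _ wlM
    simp only [KernelFork.map_ι, Fork.ι_ofι] at hl
    obtain ⟨l, hl⟩ : ∃ l' : sc.pt ⟶ Yo.obj P,
        l' ≫ Yo.map k = biprod.lift sc.fst sc.snd ≫ e.inv := ⟨l, hl⟩
    refine ⟨l, ?_, ?_⟩
    · rw [hp₁, ← Category.assoc, hl, Category.assoc, Iso.inv_hom_id_assoc, biprod.lift_fst]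
    · rw [hp₂, ← Category.assoc, hl, Category.assoc, Iso.inv_hom_id_assoc, biprod.lift_snd]
  refine ⟨⟨hcomm⟩, ⟨PullbackCone.IsLimit.mk hcomm (fun sc => (hlift sc).choose)
    (fun sc => (hlift sc).choose_spec.1) (fun sc => (hlift sc).choose_spec.2)
    (fun sc m hm1 hm2 => ?_)⟩⟩
  have heq : m ≫ Yo.map k = (hlift sc).choose ≫ Yo.map k := by
    rw [hYk, hkM, ← Category.assoc, ← Category.assoc]
    congr 1
    apply biprod.hom_ext
    · simp only [Category.assoc, biprod.lift_fst]
      rw [hm1, (hlift sc).choose_spec.1]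
    · simp only [Category.assoc, biprod.lift_snd]
      rw [hm2, (hlift sc).choose_spec.2]
  exact (cancel_mono (Yo.map k)).1 heq

end CHelpers

end EffSerre

open EffSerre in
/-- Let ℰ be a deflation-exact category with kernels satisfying the obscure axiom R3.
Then the effaceable functors form a Serre subcategory of the abelian category `mod(ℰ)`:
they are closed under subobjects, quotients, and extensions. -/
theorem effaceable_is_serre
    {C : Type u} [Category.{v} C] [Preadditive C] [HasKernels C]
    (S : ConflationStructure C) (hde : IsDeflationExact S) (hR3 : AxiomR3 S)
    {M : Type u₂} [Category.{v₂} M] [Abelian M] (Yo : C ⥤ M) (hM : IsModCategory Yo) :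
    -- closed under subobjects
    (∀ {N E : M} (ι : N ⟶ E), Mono ι → Effaceable S Yo E → Effaceable S Yo N) ∧
    -- closed under quotients
    (∀ {E Q : M} (q : E ⟶ Q), Epi q → Effaceable S Yo E → Effaceable S Yo Q) ∧
    -- closed under extensions
    (∀ {A B Z : M} (i : A ⟶ B) (q : B ⟶ Z) (w : i ≫ q = 0),
      (ShortComplex.mk i q w).ShortExact → Effaceable S Yo A → Effaceable S Yo Z →
        Effaceable S Yo B) := by
  haveI := hM.full
  haveI := hM.faithful
  haveI := hM.additive
  refine ⟨?_, ?_, ?_⟩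
  -- ===================== subobjects =====================
  · intro N EM ι hι hE
    obtain ⟨A, B, f, hf, ⟨isoE⟩⟩ := hE
    haveI := hι
    have hc := isColimitCoforkCompIso (Yo.map f) isoE
    haveI : Epi (cokernel.π (Yo.map f) ≫ isoE.hom) := epi_comp _ _
    obtain ⟨Y, ρ, hρ⟩ := exists_epi_rep Yo hM N
    haveI := hρ
    haveI := hM.projective_rep Y
    have hsc : Projective.factorThru (ρ ≫ ι) (cokernel.π (Yo.map f) ≫ isoE.hom) ≫
        (cokernel.π (Yo.map f) ≫ isoE.hom) = ρ ≫ ι := Projective.factorThru_comp _ _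
    obtain ⟨P, p₁, p₂, hpb⟩ := hde.R2_exists f
      (Yo.preimage (Projective.factorThru (ρ ≫ ι) (cokernel.π (Yo.map f) ≫ isoE.hom))) hf
    have hdefl : S.Deflation p₂ := hde.R2_stable hpb hf
    have hpbM := map_isPullback Yo hM hpb
    rw [Yo.map_preimage] at hpbM
    have wρ : Yo.map p₂ ≫ ρ = 0 := by
      rw [← cancel_mono ι, Category.assoc, zero_comp, ← hsc, ← Category.assoc, ← hpbM.w,
        Category.assoc]
      simp [cokernel.condition_assoc]
    have hL2 := isColimitSub hc hpbM ι ρ hsc wρ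
    exact ⟨P, Y, p₂, hdefl, ⟨cokernelIsoOfIsColimit hL2⟩⟩
  -- ===================== quotients =====================
  · intro EM Q qm hq hE
    obtain ⟨A, B, f, hf, ⟨isoE⟩⟩ := hE
    haveI := hq
    have hc := isColimitCoforkCompIso (Yo.map f) isoE
    haveI : Epi (cokernel.π (Yo.map f) ≫ isoE.hom) := epi_comp _ _
    obtain ⟨Y, ρ, hρ⟩ := exists_epi_rep Yo hM (kernel qm)
    haveI := hρ
    haveI := hM.projective_rep Y
    have hsc : Projective.factorThru (ρ ≫ kernel.ι qm) (cokernel.π (Yo.map f) ≫ isoE.hom) ≫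
        (cokernel.π (Yo.map f) ≫ isoE.hom) = ρ ≫ kernel.ι qm :=
      Projective.factorThru_comp _ _
    have hL1 := isColimitQuotient (Yo.map f) (cokernel.π (Yo.map f) ≫ isoE.hom) hc qm
      (kernel.ι qm) (wι := kernel.condition qm) (kernelIsKernel qm) ρ
      (Projective.factorThru (ρ ≫ kernel.ι qm) (cokernel.π (Yo.map f) ≫ isoE.hom)) hsc
    obtain ⟨E, ⟨e⟩⟩ := exists_surrogate Yo hM A Y
    have hYg : Yo.map (Yo.preimage (e.hom ≫ biprod.desc (Yo.map f)
        (Projective.factorThru (ρ ≫ kernel.ι qm) (cokernel.π (Yo.map f) ≫ isoE.hom))))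
        = e.hom ≫ biprod.desc (Yo.map f)
          (Projective.factorThru (ρ ≫ kernel.ι qm) (cokernel.π (Yo.map f) ≫ isoE.hom)) :=
      Yo.map_preimage _
    have hig : Yo.preimage (biprod.inl ≫ e.inv) ≫ Yo.preimage (e.hom ≫ biprod.desc (Yo.map f)
        (Projective.factorThru (ρ ≫ kernel.ι qm) (cokernel.π (Yo.map f) ≫ isoE.hom))) = f := by
      apply Yo.map_injective
      rw [Yo.map_comp, Yo.map_preimage, Yo.map_preimage, Category.assoc,
        Iso.inv_hom_id_assoc, biprod.inl_desc]
    have hdefl : S.Deflation (Yo.preimage (e.hom ≫ biprod.desc (Yo.map f)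
        (Projective.factorThru (ρ ≫ kernel.ι qm) (cokernel.π (Yo.map f) ≫ isoE.hom)))) := by
      refine hR3 (Yo.preimage (biprod.inl ≫ e.inv)) _ inferInstance ?_
      rw [hig]; exact hf
    refine ⟨E, B, _, hdefl, ⟨?_⟩⟩
    calc cokernel (Yo.map (Yo.preimage (e.hom ≫ biprod.desc (Yo.map f)
          (Projective.factorThru (ρ ≫ kernel.ι qm) (cokernel.π (Yo.map f) ≫ isoE.hom)))))
        ≅ cokernel (e.hom ≫ biprod.desc (Yo.map f)
          (Projective.factorThru (ρ ≫ kernel.ι qm) (cokernel.π (Yo.map f) ≫ isoE.hom))) :=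
          cokernelIsoOfEq hYg
      _ ≅ cokernel (biprod.desc (Yo.map f)
          (Projective.factorThru (ρ ≫ kernel.ι qm) (cokernel.π (Yo.map f) ≫ isoE.hom))) :=
          cokernelEpiComp _ _
      _ ≅ Q := cokernelIsoOfIsColimit hL1
  -- ===================== extensions =====================
  · intro Am Bm Zm im qm wiq hse hA hZ
    obtain ⟨A₁, A₂, fA, hfA, ⟨isoA⟩⟩ := hA
    obtain ⟨Z₁, Z₂, fZ, hfZ, ⟨isoZ⟩⟩ := hZ
    have hcA := isColimitCoforkCompIso (Yo.map fA) isoA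
    have hcZ := isColimitCoforkCompIso (Yo.map fZ) isoZ
    haveI : Epi (cokernel.π (Yo.map fA) ≫ isoA.hom) := epi_comp _ _
    haveI : Epi (cokernel.π (Yo.map fZ) ≫ isoZ.hom) := epi_comp _ _
    haveI := hse.epi_g
    haveI := hM.projective_rep Z₂
    haveI := hM.projective_rep Z₁
    set cA : Yo.obj A₂ ⟶ Am := cokernel.π (Yo.map fA) ≫ isoA.hom with hcAdef
    set cZ : Yo.obj Z₂ ⟶ Zm := cokernel.π (Yo.map fZ) ≫ isoZ.hom with hcZdef
    set t₂ : Yo.obj Z₂ ⟶ Bm := Projective.factorThru cZ qm with ht₂def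
    have ht₂ : t₂ ≫ qm = cZ := Projective.factorThru_comp _ _
    have waA : Yo.map fA ≫ cA = 0 := by
      rw [hcAdef, ← Category.assoc, cokernel.condition, zero_comp]
    have waZ : Yo.map fZ ≫ cZ = 0 := by
      rw [hcZdef, ← Category.assoc, cokernel.condition, zero_comp]
    have hwq : (Yo.map fZ ≫ t₂) ≫ qm = 0 := by
      rw [Category.assoc, ht₂]; exact waZ
    obtain ⟨w', hw'⟩ := KernelFork.IsLimit.lift' hse.fIsKernel (Yo.map fZ ≫ t₂) hwq
    have hw'' : w' ≫ im = Yo.map fZ ≫ t₂ := by simpa using hw'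
    set θM : Yo.obj Z₁ ⟶ Yo.obj A₂ := Projective.factorThru (-w') cA with hθMdef
    have hθM : θM ≫ cA = -w' := Projective.factorThru_comp _ _
    have hθ : θM ≫ (cA ≫ im) + Yo.map fZ ≫ t₂ = 0 := by
      rw [← Category.assoc, hθM, Preadditive.neg_comp, hw'', neg_add_cancel]
    set G : Yo.obj A₁ ⊞ Yo.obj Z₁ ⟶ Yo.obj A₂ ⊞ Yo.obj Z₂ :=
      biprod.desc (Yo.map fA ≫ biprod.inl) (θM ≫ biprod.inl + Yo.map fZ ≫ biprod.inr)
      with hGdef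
    set t : Yo.obj A₂ ⊞ Yo.obj Z₂ ⟶ Bm := biprod.desc (cA ≫ im) t₂ with htdef
    have wGt : G ≫ t = 0 := by
      rw [hGdef, htdef]
      apply biprod.hom_ext'
      · simp only [biprod.inl_desc_assoc, Category.assoc, biprod.inl_desc, comp_zero]
        rw [← Category.assoc, waA, zero_comp]
      · simp only [biprod.inr_desc_assoc, Preadditive.add_comp, Category.assoc,
          biprod.inl_desc, biprod.inr_desc, comp_zero]
        exact hθ
    have hL3 := isColimitExt im qm wiq hse (Yo.map fA) cA waA hcA (Yo.map fZ) cZ waZ hcZ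
      t₂ ht₂ θM hθ wGt
    -- C-side
    obtain ⟨E₁, ⟨e₁⟩⟩ := exists_surrogate Yo hM A₁ Z₁
    obtain ⟨E₂, ⟨e₂⟩⟩ := exists_surrogate Yo hM A₂ Z₂
    obtain ⟨E', ⟨e'⟩⟩ := exists_surrogate Yo hM A₂ Z₁
    set g₁ : E₁ ⟶ E' :=
      Yo.preimage (e₁.hom ≫ biprod.map (Yo.map fA) (𝟙 (Yo.obj Z₁)) ≫ e'.inv) with hg₁def
    set g₂ : E' ⟶ E₂ :=
      Yo.preimage (e'.hom ≫ biprod.map (𝟙 (Yo.obj A₂)) (Yo.map fZ) ≫ e₂.inv) with hg₂def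
    have shear_hom_inv : (biprod.desc biprod.inl (θM ≫ biprod.inl + biprod.inr) :
        Yo.obj A₂ ⊞ Yo.obj Z₁ ⟶ _) ≫
        biprod.desc biprod.inl ((-θM) ≫ biprod.inl + biprod.inr) = 𝟙 _ := by
      apply biprod.hom_ext' <;>
        simp [Preadditive.add_comp, Preadditive.neg_comp]
    have shear_inv_hom : (biprod.desc biprod.inl ((-θM) ≫ biprod.inl + biprod.inr) :
        Yo.obj A₂ ⊞ Yo.obj Z₁ ⟶ _) ≫
        biprod.desc biprod.inl (θM ≫ biprod.inl + biprod.inr) = 𝟙 _ := by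
      apply biprod.hom_ext' <;>
        simp [Preadditive.add_comp, Preadditive.neg_comp]
    set shear : Yo.obj A₂ ⊞ Yo.obj Z₁ ≅ Yo.obj A₂ ⊞ Yo.obj Z₁ :=
      { hom := biprod.desc biprod.inl (θM ≫ biprod.inl + biprod.inr)
        inv := biprod.desc biprod.inl ((-θM) ≫ biprod.inl + biprod.inr)
        hom_inv_id := shear_hom_inv
        inv_hom_id := shear_inv_hom } with hsheardef
    set sC : E' ≅ E' := Yo.preimageIso (e' ≪≫ shear ≪≫ e'.symm) with hsCdef
    have hYsC : Yo.map sC.hom = e'.hom ≫ shear.hom ≫ e'.inv := by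
      rw [hsCdef]
      show Yo.map (Yo.preimage _) = _
      rw [Yo.map_preimage]
      simp
    -- deflations
    have hdefl₁ : S.Deflation g₁ := by
      have hpbM := isPullback_biprod_fst (Yo.map fA) e₁ e'
      have hpbM' : IsPullback (Yo.map (Yo.preimage (e₁.hom ≫ biprod.fst))) (Yo.map g₁)
          (Yo.map fA) (Yo.map (Yo.preimage (e'.hom ≫ biprod.fst))) := by
        simpa only [Functor.map_preimage, hg₁def] using hpbM
      exact hde.R2_stable (isPullback_of_map_isPullback Yo hpbM') hfA
    have hdefl₂ : S.Deflation g₂ := by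
      have hpbM := isPullback_biprod_snd (Yo.map fZ) e' e₂
      have hpbM' : IsPullback (Yo.map (Yo.preimage (e'.hom ≫ biprod.snd))) (Yo.map g₂)
          (Yo.map fZ) (Yo.map (Yo.preimage (e₂.hom ≫ biprod.snd))) := by
        simpa only [Functor.map_preimage, hg₂def] using hpbM
      exact hde.R2_stable (isPullback_of_map_isPullback Yo hpbM') hfZ
    have hdefl : S.Deflation (g₁ ≫ sC.hom ≫ g₂) :=
      hde.R1 hdefl₁ (deflation_iso_comp S sC hdefl₂)
    -- the matrix identity
    have hmat : biprod.map (Yo.map fA) (𝟙 (Yo.obj Z₁)) ≫ shear.hom ≫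
        biprod.map (𝟙 (Yo.obj A₂)) (Yo.map fZ) = G := by
      rw [hsheardef, hGdef]
      apply biprod.hom_ext' <;>
        simp [Preadditive.add_comp, Preadditive.comp_add]
    have hYg : Yo.map (g₁ ≫ sC.hom ≫ g₂) = e₁.hom ≫ G ≫ e₂.inv := by
      rw [Yo.map_comp, Yo.map_comp, hYsC, hg₁def, hg₂def, Yo.map_preimage, Yo.map_preimage]
      rw [← hmat]
      simp only [Category.assoc, Iso.inv_hom_id_assoc]
    refine ⟨E₁, E₂, g₁ ≫ sC.hom ≫ g₂, hdefl, ⟨?_⟩⟩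
    calc cokernel (Yo.map (g₁ ≫ sC.hom ≫ g₂))
        ≅ cokernel (e₁.hom ≫ G ≫ e₂.inv) := cokernelIsoOfEq hYg
      _ ≅ cokernel (G ≫ e₂.inv) := cokernelEpiComp _ _
      _ ≅ cokernel G := cokernelCompIsIso _ _
      _ ≅ Bm := cokernelIsoOfIsColimit hL3
end

section
/- Let ℰ be a deflation-exact category and ℰ^ex its exact hull, with fully faithful embedding j : ℰ → ℰ^ex. A morphism f : X → Y in ℰ is a monomorphism (respectively, an epimorphism) if and only if j(f) is a monomorphism (respectively, an epimorphism) in ℰ^ex. -/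
open CategoryTheory CategoryTheory.Limits

universe v u v₂ u₂

/-- The objects of the exact hull: iterated extensions (in the sense of the conflation
structure of the hull) of objects in the image of `j`, up to isomorphism. -/
inductive InHull {C : Type u} [Category.{v} C] [Preadditive C]
    {H : Type u₂} [Category.{v₂} H] [Preadditive H]
    (j : C ⥤ H) (SH : ConflationStructure H) : H → Prop
  | base (X : C) : InHull j SH (j.obj X)
  | iso {X Y : H} : (X ≅ Y) → InHull j SH X → InHull j SH Y
  | ext {A T B : H} (i : A ⟶ T) (p : T ⟶ B) : SH.conf i p → InHull j SH A →
      (∃ X : C, Nonempty (B ≅ j.obj X)) → InHull j SH T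

/-- Let ℰ be a deflation-exact category and `j : ℰ ⥤ ℰ^ex` the embedding into its exact
hull (an exact category in which every object is an iterated extension of objects of ℰ).
A morphism `f` of ℰ is a monomorphism (resp. an epimorphism) if and only if `j(f)` is a
monomorphism (resp. an epimorphism) in `ℰ^ex`. -/
theorem exact_hull_reflects_and_preserves_mono_epi
    {C : Type u} [Category.{v} C] [Preadditive C]
    {H : Type u₂} [Category.{v₂} H] [Preadditive H]
    (S : ConflationStructure C) (hde : IsDeflationExact S)
    (SH : ConflationStructure H) (hdeH : IsDeflationExact SH) (hieH : IsInflationExact SH)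
    (j : C ⥤ H) (hfull : j.Full) (hfaithful : j.Faithful) (hadd : j.Additive)
    (hex : ∀ {X Y Z : C} {f : X ⟶ Y} {g : Y ⟶ Z}, S.conf f g →
      SH.conf (j.map f) (j.map g))
    (hgen : ∀ T : H, InHull j SH T) :
    ∀ {X Y : C} (f : X ⟶ Y),
      (Mono f ↔ Mono (j.map f)) ∧ (Epi f ↔ Epi (j.map f)) := by
  intro X Y f
  haveI := hfull; haveI := hfaithful; haveI := hadd
  constructor
  · constructor
    · -- Mono f → Mono (j.map f)
      intro hf
      -- base helper
      have base : ∀ (W : C) (g : j.obj W ⟶ j.obj X), g ≫ j.map f = 0 → g = 0 := by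
        intro W g hg
        obtain ⟨g', rfl⟩ := j.map_surjective g
        rw [← j.map_comp] at hg
        have : g' ≫ f = 0 := j.map_injective (by simpa using hg)
        have : g' = 0 := by
          rw [← cancel_mono f, this, zero_comp]
        simp [this]
      have key : ∀ T : H, InHull j SH T → ∀ (g : T ⟶ j.obj X),
          g ≫ j.map f = 0 → g = 0 := by
        intro T hT
        induction hT with
        | base W => exact base W
        | iso e _ ih =>
            intro g hg
            have := ih (e.hom ≫ g) (by rw [Category.assoc, hg, comp_zero])
            have h2 : e.inv ≫ e.hom ≫ g = e.inv ≫ 0 := by rw [this]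
            simpa using h2
        | ext i p hconf _ hB ih =>
            intro g hg
            have hig : i ≫ g = 0 := ih (i ≫ g) (by rw [Category.assoc, hg, comp_zero])
            obtain ⟨hc⟩ := SH.isCokernel hconf
            obtain ⟨l, hl⟩ := CokernelCofork.IsColimit.desc' hc g hig
            have hl : p ≫ l = g := hl
            obtain ⟨X', ⟨e⟩⟩ := hB
            have hl0 : l ≫ j.map f = 0 := by
              have : p ≫ (l ≫ j.map f) = p ≫ 0 := by
                rw [comp_zero, ← Category.assoc, hl]; exact hg
              exact Cofork.IsColimit.hom_ext hc (by simpa using this)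
            have : e.inv ≫ l = 0 := base X' (e.inv ≫ l)
              (by rw [Category.assoc, hl0, comp_zero])
            have hl' : l = 0 := by
              have h2 : e.hom ≫ e.inv ≫ l = e.hom ≫ 0 := by rw [this]
              simpa using h2
            rw [← hl, hl', comp_zero]
      refine Preadditive.mono_of_cancel_zero _ ?_
      intro T g hg
      exact key T (hgen T) g hg
    · intro hm; exact j.mono_of_mono_map hm
  · constructor
    · intro hf
      have base : ∀ (W : C) (g : j.obj Y ⟶ j.obj W), j.map f ≫ g = 0 → g = 0 := by
        intro W g hg
        obtain ⟨g', rfl⟩ := j.map_surjective g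
        rw [← j.map_comp] at hg
        have : f ≫ g' = 0 := j.map_injective (by simpa using hg)
        have : g' = 0 := by rw [← cancel_epi f, this, comp_zero]
        simp [this]
      have key : ∀ T : H, InHull j SH T → ∀ (g : j.obj Y ⟶ T),
          j.map f ≫ g = 0 → g = 0 := by
        intro T hT
        induction hT with
        | base W => exact base W
        | iso e _ ih =>
            intro g hg
            have := ih (g ≫ e.inv) (by rw [← Category.assoc, hg, zero_comp])
            have h2 : (g ≫ e.inv) ≫ e.hom = 0 ≫ e.hom := by rw [this]
            simpa using h2
        | ext i p hconf _ hB ih =>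
            intro g hg
            obtain ⟨X', ⟨e⟩⟩ := hB
            have hgp : g ≫ p = 0 := by
              have h1 : (g ≫ p) ≫ e.hom = 0 := base X' ((g ≫ p) ≫ e.hom)
                (by rw [← Category.assoc, ← Category.assoc, hg, zero_comp, zero_comp])
              have h2 : (g ≫ p) ≫ e.hom ≫ e.inv = 0 ≫ e.inv := by
                rw [← Category.assoc, h1, zero_comp]
              simpa using h2
            obtain ⟨hk⟩ := SH.isKernel hconf
            obtain ⟨l, hl⟩ := KernelFork.IsLimit.lift' hk g hgp
            have hl : l ≫ i = g := hl
            have hl0 : j.map f ≫ l = 0 := by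
              have : (j.map f ≫ l) ≫ i = 0 ≫ i := by
                rw [zero_comp, Category.assoc, hl]; exact hg
              exact Fork.IsLimit.hom_ext hk (by simpa using this)
            have : l = 0 := ih l hl0
            rw [← hl, this, zero_comp]
      refine Preadditive.epi_of_cancel_zero _ ?_
      intro T g hg
      exact key T (hgen T) g hg
    · intro hm; exact j.epi_of_epi_map hm
end

section
/- Let ℰ be a deflation-exact category with admissible kernels, and φ : ℰ → ℒℋ(ℰ) the exact fully faithful embedding into the left heart (an abelian category) such that every object of ℒℋ(ℰ) is a quotient of an object of ℰ, and φ preserves and reflects monomorphisms and kernels. Then the essential image of φ is closed under subobjects in ℒℋ(ℰ). -/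
open CategoryTheory CategoryTheory.Limits

universe v u v₂ u₂

/-- Let ℰ be a deflation-exact category with admissible kernels and `φ : ℰ ⥤ 𝒜` an exact
fully faithful embedding into an abelian category (playing the role of the left heart
`ℒℋ(ℰ)`) which reflects conflations, commutes with kernels, preserves monomorphisms, and
such that every object of 𝒜 is a quotient of an object of ℰ.  Then the essential image of
`φ` is closed under subobjects in 𝒜. -/
theorem left_heart_embedding_image_closed_under_subobjects
    {C : Type u} [Category.{v} C] [Preadditive C]
    (S : ConflationStructure C) (hde : IsDeflationExact S) (hak : HasAdmissibleKernels S)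
    {A : Type u₂} [Category.{v₂} A] [Abelian A]
    (φ : C ⥤ A) (hfull : φ.Full) (hfaithful : φ.Faithful) (hadd : φ.Additive)
    (hex : ∀ {X Y Z : C} {f : X ⟶ Y} {g : Y ⟶ Z}, S.conf f g →
      ∀ (w : φ.map f ≫ φ.map g = 0), (ShortComplex.mk (φ.map f) (φ.map g) w).ShortExact)
    (hreflect : ∀ {X Y Z : C} (f : X ⟶ Y) (g : Y ⟶ Z),
      (∀ (w : φ.map f ≫ φ.map g = 0), (ShortComplex.mk (φ.map f) (φ.map g) w).ShortExact) →
      φ.map f ≫ φ.map g = 0 → S.conf f g)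
    (hker : ∀ {K X Y : C} (k : K ⟶ X) (f : X ⟶ Y) (w : k ≫ f = 0),
      IsLimit (KernelFork.ofι k w) → ∀ (w' : φ.map k ≫ φ.map f = 0),
        Nonempty (IsLimit (KernelFork.ofι (φ.map k) w')))
    (hmono : ∀ {X Y : C} (f : X ⟶ Y), Mono f → Mono (φ.map f))
    (hquot : ∀ Z : A, ∃ (Y : C) (p : φ.obj Y ⟶ Z), Epi p) :
    ∀ {X : A} {Y : C} (f : X ⟶ φ.obj Y), Mono f →
      ∃ X' : C, Nonempty (X ≅ φ.obj X') := by
  intro X Y f hf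
  haveI := hfull; haveI := hfaithful; haveI := hadd; haveI := hf
  obtain ⟨B, g, hg⟩ := hquot X
  haveI := hg
  obtain ⟨h', hh'⟩ := φ.map_surjective (g ≫ f)
  obtain ⟨K, k, w, ⟨hkl⟩, Z, d, hconf⟩ := hak h'
  have w' : φ.map k ≫ φ.map h' = 0 := by rw [← φ.map_comp, w, φ.map_zero]
  obtain ⟨hkl'⟩ := hker k h' w hkl w'
  have wg : φ.map k ≫ g = 0 := by
    have h1 : (φ.map k ≫ g) ≫ f = 0 := by rw [Category.assoc, ← hh', w']
    exact zero_of_comp_mono f h1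
  have hklg : IsLimit (KernelFork.ofι (φ.map k) wg) :=
    isKernelOfComp f (φ.map h') hkl' wg hh'.symm
  have hgcoker : IsColimit (CokernelCofork.ofπ g wg) :=
    Abelian.epiIsCokernelOfKernel _ hklg
  have wd : φ.map k ≫ φ.map d = 0 := by rw [← φ.map_comp, S.comp_zero hconf, φ.map_zero]
  have hse := hex hconf wd
  haveI := hse.epi_g
  have hdcoker : IsColimit (CokernelCofork.ofπ (φ.map d) wd) := hse.exact.gIsCokernel
  exact ⟨Z, ⟨hgcoker.coconePointUniqueUpToIso hdcoker⟩⟩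
end

section
/- Let ℰ be a deflation-exact category with admissible kernels. In the homotopy category of monomorphisms hMon(ℰ), a morphism u : δ_E → δ_F is both a monomorphism and an epimorphism (equivalently, corresponds to a bimorphism in mod₁(ℰ)) if and only if the defining commutative square (E^{-1} → E^0, F^{-1} → F^0, u_{-1}, u_0) is bicartesian (both a pullback and a pushout). -/
open CategoryTheory CategoryTheory.Limits

universe v u

/-- A morphism of monomorphisms `(u₁, u₀) : δE → δF` is null-homotopic if there is
`t : E⁰ ⟶ F⁻¹` with `δE ≫ t = u₁` and `t ≫ δF = u₀`. -/
def NullHomotopic {C : Type u} [Category.{v} C] [Preadditive C]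
    {E₁ E₀ F₁ F₀ : C} (δE : E₁ ⟶ E₀) (δF : F₁ ⟶ F₀)
    (u₁ : E₁ ⟶ F₁) (u₀ : E₀ ⟶ F₀) : Prop :=
  ∃ t : E₀ ⟶ F₁, δE ≫ t = u₁ ∧ t ≫ δF = u₀

/-- Let ℰ be a deflation-exact category with admissible kernels, and let
`u = (u₁, u₀) : δE → δF` be a morphism in the homotopy category of monomorphisms
`hMon(ℰ)`.  Then `u` is both a monomorphism and an epimorphism in `hMon(ℰ)` if and only
if the defining commutative square is bicartesian (both a pullback and a pushout). -/
theorem hMon_bimorphism_iff_bicartesian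
    {C : Type u} [Category.{v} C] [Preadditive C]
    (S : ConflationStructure C) (hde : IsDeflationExact S) (hak : HasAdmissibleKernels S)
    {E₁ E₀ F₁ F₀ : C} (δE : E₁ ⟶ E₀) (δF : F₁ ⟶ F₀)
    (hδE : Mono δE) (hδF : Mono δF)
    (u₁ : E₁ ⟶ F₁) (u₀ : E₀ ⟶ F₀) (comm : δE ≫ u₀ = u₁ ≫ δF) :
    -- u is a monomorphism and an epimorphism in hMon(ℰ)
    ((∀ {T₁ T₀ : C} (δT : T₁ ⟶ T₀), Mono δT →
        ∀ (w₁ : T₁ ⟶ E₁) (w₀ : T₀ ⟶ E₀), δT ≫ w₀ = w₁ ≫ δE →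
          NullHomotopic δT δF (w₁ ≫ u₁) (w₀ ≫ u₀) → NullHomotopic δT δE w₁ w₀) ∧
      (∀ {T₁ T₀ : C} (δT : T₁ ⟶ T₀), Mono δT →
        ∀ (w₁ : F₁ ⟶ T₁) (w₀ : F₀ ⟶ T₀), δF ≫ w₀ = w₁ ≫ δT →
          NullHomotopic δE δT (u₁ ≫ w₁) (u₀ ≫ w₀) → NullHomotopic δF δT w₁ w₀)) ↔
    -- the square is bicartesian
    (IsPullback δE u₁ u₀ δF ∧ IsPushout δE u₁ u₀ δF) := by
  haveI := hδE
  haveI := hδF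
  constructor
  · rintro ⟨hmono, hepi⟩
    -- Part 1: the mono condition implies the square is a pullback.
    have key_lift : ∀ {W : C} (a : W ⟶ E₀) (b : W ⟶ F₁), a ≫ u₀ = b ≫ δF →
        ∃ z : W ⟶ E₁, z ≫ δE = a ∧ z ≫ u₁ = b := by
      intro W a b hab
      obtain ⟨Z, zW, hZ, hdefW⟩ := hde.R0 W
      obtain ⟨P, πW, πE, hP⟩ := hde.R2_exists zW (0 : E₁ ⟶ Z) hdefW
      obtain ⟨K, k, hkw, ⟨hkc⟩, -⟩ := hak (πW ≫ a - πE ≫ δE)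
      have hTE : (k ≫ πW) ≫ a = (k ≫ πE) ≫ δE := by
        have h := hkw
        rw [Preadditive.comp_sub, sub_eq_zero] at h
        simpa [Category.assoc] using h
      haveI hkmono : Mono k := by
        have := mono_of_isLimit_fork hkc
        simpa using this
      have hmT : Mono (k ≫ πW) := by
        apply Preadditive.mono_of_cancel_zero
        intro P' c hc
        have h1 : (c ≫ (k ≫ πE)) ≫ δE = 0 := by
          rw [Category.assoc, ← hTE, ← Category.assoc, hc, zero_comp]
        have h2 : c ≫ (k ≫ πE) = 0 := by
          apply (cancel_mono δE).mp
          rw [h1, zero_comp]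
        have h3 : c ≫ k = 0 := by
          apply hP.hom_ext
          · simpa [Category.assoc] using hc
          · simpa [Category.assoc] using h2
        apply (cancel_mono k).mp
        rw [h3, zero_comp]
      have hb1 : (k ≫ πW) ≫ b = (k ≫ πE) ≫ u₁ := by
        apply (cancel_mono δF).mp
        have h1 : ((k ≫ πW) ≫ b) ≫ δF = ((k ≫ πW) ≫ a) ≫ u₀ := by
          simp only [Category.assoc]; rw [hab]
        rw [h1, hTE, Category.assoc, comm, ← Category.assoc]
      obtain ⟨z, hz1, hz2⟩ :=
        hmono (k ≫ πW) hmT (k ≫ πE) a hTE ⟨b, hb1, hab.symm⟩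
      refine ⟨z, hz2, ?_⟩
      apply (cancel_mono δF).mp
      rw [Category.assoc, ← comm, ← Category.assoc, hz2, hab]
    have hpb : IsPullback δE u₁ u₀ δF := by
      apply IsPullback.of_isLimit (c := PullbackCone.mk δE u₁ comm)
      apply PullbackCone.IsLimit.mk comm
        (fun s => (key_lift s.fst s.snd s.condition).choose)
        (fun s => (key_lift s.fst s.snd s.condition).choose_spec.1)
        (fun s => (key_lift s.fst s.snd s.condition).choose_spec.2)
      intro s m hm1 hm2
      apply (cancel_mono δE).mp
      rw [hm1, (key_lift s.fst s.snd s.condition).choose_spec.1]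
    -- Part 2: the epi condition (plus the pullback) implies the square is a pushout.
    obtain ⟨Z, zE, hZ, hdefE⟩ := hde.R0 E₀
    obtain ⟨B, π₀, π₁, hB⟩ := hde.R2_exists zE (0 : F₁ ⟶ Z) hdefE
    set ϕ : E₁ ⟶ B := hB.lift δE (-u₁) (hZ.eq_of_tgt _ _) with hϕdef
    have ϕ₀ : ϕ ≫ π₀ = δE := hB.lift_fst _ _ _
    have ϕ₁ : ϕ ≫ π₁ = -u₁ := hB.lift_snd _ _ _
    set ρ : B ⟶ F₀ := π₀ ≫ u₀ + π₁ ≫ δF with hρdef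
    have hϕρ : ϕ ≫ ρ = 0 := by
      rw [hρdef, Preadditive.comp_add, ← Category.assoc, ← Category.assoc, ϕ₀, ϕ₁,
        comm, Preadditive.neg_comp]
      simp
    haveI hϕmono : Mono ϕ := by
      haveI : Mono (ϕ ≫ π₀) := by rw [ϕ₀]; exact hδE
      exact mono_of_mono ϕ π₀
    have hker : IsLimit (KernelFork.ofι ϕ hϕρ) := by
      apply KernelFork.IsLimit.ofι' ϕ hϕρ
      intro A s hs
      have hs' : (s ≫ π₀) ≫ u₀ = (-(s ≫ π₁)) ≫ δF := by
        rw [Preadditive.neg_comp, eq_neg_iff_add_eq_zero]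
        have := hs
        rw [hρdef, Preadditive.comp_add, ← Category.assoc, ← Category.assoc] at this
        exact this
      refine ⟨hpb.lift (s ≫ π₀) (-(s ≫ π₁)) hs', ?_⟩
      apply hB.hom_ext
      · rw [Category.assoc, ϕ₀, hpb.lift_fst]
      · rw [Category.assoc, ϕ₁, Preadditive.comp_neg, hpb.lift_snd, neg_neg]
    obtain ⟨K, k, hkw, ⟨hkc⟩, hinf⟩ := hak ρ
    obtain ⟨Q, g, hconfk⟩ := hinf
    set e := hker.conePointUniqueUpToIso hkc with hedef
    have he : e.hom ≫ k = ϕ := by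
      simpa using hker.conePointUniqueUpToIso_hom_comp hkc Limits.WalkingParallelPair.zero
    have hconfϕ : S.conf ϕ g := by
      have := S.iso_closed e (Iso.refl B) (Iso.refl Q) hconfk
      simpa [he] using this
    have hdefg : S.Deflation g := ⟨_, ϕ, hconfϕ⟩
    have hϕg : ϕ ≫ g = 0 := S.comp_zero hconfϕ
    obtain ⟨hgco⟩ := S.isCokernel hconfϕ
    obtain ⟨q, hq⟩ := Cofork.IsColimit.desc' hgco ρ (by rw [hϕρ, zero_comp])
    have hq' : g ≫ q = ρ := by simpa using hq
    have hEpig : Epi g := by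
      have := epi_of_isColimit_cofork hgco
      simpa using this
    haveI hMonoq : Mono q := by
      apply Preadditive.mono_of_cancel_zero
      intro W w hw
      obtain ⟨P', a, b, hP'⟩ := hde.R2_exists g w hdefg
      have hcomm : a ≫ g = b ≫ w := hP'.w
      have haρ : a ≫ ρ = 0 := by
        rw [← hq', ← Category.assoc, hcomm, Category.assoc, hw, comp_zero]
      obtain ⟨z, hz⟩ := Fork.IsLimit.lift' hker a (by simpa using haρ)
      have hz' : z ≫ ϕ = a := by simpa using hz
      have hbw : b ≫ w = 0 := by
        rw [← hcomm, ← hz', Category.assoc, hϕg, comp_zero]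
      haveI : Epi b := by
        have hdefb := hde.R2_stable hP' hdefg
        obtain ⟨X', f', hconfb⟩ := hdefb
        obtain ⟨hbco⟩ := S.isCokernel hconfb
        have := epi_of_isColimit_cofork hbco
        simpa using this
      rw [← cancel_epi b, hbw, comp_zero]
    set ι₀ : E₀ ⟶ B := hB.lift (𝟙 E₀) 0 (hZ.eq_of_tgt _ _) with hι₀def
    set ι₁ : F₁ ⟶ B := hB.lift 0 (𝟙 F₁) (hZ.eq_of_tgt _ _) with hι₁def
    have hι₀ρ : ι₀ ≫ ρ = u₀ := by
      rw [hρdef, Preadditive.comp_add, ← Category.assoc, ← Category.assoc,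
        hB.lift_fst, hB.lift_snd]
      simp
    have hι₁ρ : ι₁ ≫ ρ = δF := by
      rw [hρdef, Preadditive.comp_add, ← Category.assoc, ← Category.assoc,
        hB.lift_fst, hB.lift_snd]
      simp
    have hϕdecomp : δE ≫ ι₀ - u₁ ≫ ι₁ = ϕ := by
      apply hB.hom_ext
      · rw [Preadditive.sub_comp, Category.assoc, Category.assoc, hB.lift_fst,
          hB.lift_fst, ϕ₀]
        simp
      · rw [Preadditive.sub_comp, Category.assoc, Category.assoc, hB.lift_snd,
          hB.lift_snd, ϕ₁]
        simp
    have hkey : δE ≫ ι₀ ≫ g = u₁ ≫ ι₁ ≫ g := by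
      have h0 : (δE ≫ ι₀ - u₁ ≫ ι₁) ≫ g = 0 := by rw [hϕdecomp, hϕg]
      rw [Preadditive.sub_comp, sub_eq_zero, Category.assoc, Category.assoc] at h0
      exact h0
    obtain ⟨s, hs1, hs2⟩ := hepi q hMonoq (ι₁ ≫ g) (𝟙 F₀)
      (by rw [Category.comp_id, Category.assoc, hq', hι₁ρ])
      ⟨ι₀ ≫ g, hkey, by rw [Category.comp_id, Category.assoc, hq', hι₀ρ]⟩
    -- hs2 : s ≫ q = 𝟙 F₀
    have hqs : q ≫ s = 𝟙 Q := by
      apply (cancel_mono q).mp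
      simp [Category.assoc, hs2]
    haveI : IsIso q := ⟨s, hqs, hs2⟩
    refine ⟨hpb, ?_⟩
    have hcond : ∀ s' : PushoutCocone δE u₁,
        ϕ ≫ (π₀ ≫ s'.inl + π₁ ≫ s'.inr) = 0 ≫ (π₀ ≫ s'.inl + π₁ ≫ s'.inr) := by
      intro s'
      rw [zero_comp, Preadditive.comp_add, ← Category.assoc, ← Category.assoc, ϕ₀, ϕ₁,
        Preadditive.neg_comp, s'.condition]
      simp
    set d : ∀ s' : PushoutCocone δE u₁, Q ⟶ s'.pt :=
      fun s' => (Cofork.IsColimit.desc' hgco (π₀ ≫ s'.inl + π₁ ≫ s'.inr) (hcond s')).1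
      with hddef
    have hd : ∀ s' : PushoutCocone δE u₁, g ≫ d s' = π₀ ≫ s'.inl + π₁ ≫ s'.inr := by
      intro s'
      simpa using (Cofork.IsColimit.desc' hgco (π₀ ≫ s'.inl + π₁ ≫ s'.inr) (hcond s')).2
    apply IsPushout.of_isColimit (c := PushoutCocone.mk u₀ δF comm)
    apply PushoutCocone.IsColimit.mk comm (fun s' => inv q ≫ d s')
    · intro s'
      have hu₀ : u₀ = ι₀ ≫ g ≫ q := by rw [hq', hι₀ρ]
      rw [hu₀, Category.assoc, Category.assoc, IsIso.hom_inv_id_assoc, hd,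
        Preadditive.comp_add, ← Category.assoc, ← Category.assoc, hB.lift_fst, hB.lift_snd]
      simp
    · intro s'
      have hδF' : δF = ι₁ ≫ g ≫ q := by rw [hq', hι₁ρ]
      rw [hδF', Category.assoc, Category.assoc, IsIso.hom_inv_id_assoc, hd,
        Preadditive.comp_add, ← Category.assoc, ← Category.assoc, hB.lift_fst, hB.lift_snd]
      simp
    · intro s' m hm1 hm2
      have hqm : q ≫ m = d s' := by
        rw [← cancel_epi g, ← Category.assoc, hq', hd, hρdef, Preadditive.add_comp,
          Category.assoc, Category.assoc, hm1, hm2]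
      rw [← hqm, IsIso.inv_hom_id_assoc]
  · rintro ⟨hpb, hpo⟩
    constructor
    · intro T₁ T₀ δT hδT w₁ w₀ hw hnh
      obtain ⟨t, ht1, ht2⟩ := hnh
      refine ⟨hpb.lift w₀ t ht2.symm, ?_, hpb.lift_fst _ _ _⟩
      apply (cancel_mono δE).mp
      rw [Category.assoc, hpb.lift_fst, hw]
    · intro T₁ T₀ δT hδT w₁ w₀ hw hnh
      obtain ⟨t, ht1, ht2⟩ := hnh
      refine ⟨hpo.desc t w₁ ht1, hpo.inr_desc _ _ _, ?_⟩
      apply hpo.hom_ext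
      · rw [← Category.assoc, hpo.inl_desc, ht2]
      · rw [← Category.assoc, hpo.inr_desc, ← hw]
end

section
/- Let 𝒜 be an abelian category with a hereditary torsion pair (𝒯, ℱ), and Σ the class of morphisms with torsion kernel and cokernel. Then the inclusion ℱ → 𝒜 induces an equivalence of categories ℱ[(Σ ∩ Mor ℱ)^{-1}] ≃ 𝒜[Σ^{-1}], i.e., the localization of the torsionfree class at its bimorphisms is equivalent to the Serre quotient 𝒜/𝒯. -/
open CategoryTheory CategoryTheory.Limits

universe v u

/-- The class `Σ` of morphisms with torsion kernel and cokernel. -/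
def sigmaClass {C : Type u} [Category.{v} C] [Abelian C] (T : C → Prop) :
    MorphismProperty C :=
  fun _ _ f => T (kernel f) ∧ T (cokernel f)

/-- The restriction of `Σ` to the torsionfree class `ℱ`; these are exactly the
bimorphisms of `ℱ`. -/
def sigmaClassF {C : Type u} [Category.{v} C] [Abelian C] (T F : C → Prop) :
    MorphismProperty (ObjectProperty.FullSubcategory F) :=
  fun X Y f => T (kernel (show X.obj ⟶ Y.obj from f.hom)) ∧
    T (cokernel (show X.obj ⟶ Y.obj from f.hom))

namespace TorsLoc

variable {C : Type u} [Category.{v} C] [Abelian C] {T F : C → Prop}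

/-- Torsion criterion: if every map to a torsionfree object vanishes, `M` is torsion. -/
lemma torsion_of_hom_zero (htp : HereditaryTorsionPair T F) {M : C}
    (h : ∀ Z : C, F Z → ∀ g : M ⟶ Z, g = 0) : T M := by
  obtain ⟨A, B, i, p, w, hA, hB, hse⟩ := htp.exists_ses M
  haveI := hse.mono_f
  haveI := hse.epi_g
  have hp : p = 0 := h B hB p
  have hepi : Epi i := by
    refine Preadditive.epi_of_cancel_zero i (fun g hg => ?_)
    obtain ⟨l, hl⟩ := CokernelCofork.IsColimit.desc' hse.gIsCokernel g hg
    dsimp at hl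
    rw [← hl, hp, zero_comp]
  haveI : IsIso i := isIso_of_mono_of_epi i
  exact htp.replete_T (asIso i) hA

lemma torsion_of_isZero (htp : HereditaryTorsionPair T F) {M : C} (h : IsZero M) : T M :=
  torsion_of_hom_zero htp fun _ _ g => h.eq_zero_of_src g

lemma torsion_quotient (htp : HereditaryTorsionPair T F) {X Y : C} (hX : T X)
    (e : X ⟶ Y) [Epi e] : T Y := by
  refine torsion_of_hom_zero htp fun Z hZ g => ?_
  have := htp.hom_zero hX hZ (e ≫ g)
  rwa [← cancel_epi e, comp_zero]

lemma torsion_ext (htp : HereditaryTorsionPair T F) {S E : C} (m : S ⟶ E)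
    (hS : T S) (hc : T (cokernel m)) : T E := by
  refine torsion_of_hom_zero htp fun Z hZ g => ?_
  have h1 : m ≫ g = 0 := htp.hom_zero hS hZ _
  rw [← cokernel.π_desc m g h1, htp.hom_zero hc hZ (cokernel.desc m g h1), comp_zero]

lemma isZero_torsion_sub (htp : HereditaryTorsionPair T F) {A X : C} (m : A ⟶ X) [Mono m]
    (hA : T A) (hX : F X) : IsZero A :=
  IsZero.of_mono_eq_zero m (htp.hom_zero hA hX m)

/-- If the kernel of `u ≫ g` is torsion and `u` is epi, the kernel of `g` is torsion. -/
lemma torsion_kernel_of_epi_comp (htp : HereditaryTorsionPair T F) {X X' Z : C}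
    (u : X ⟶ X') [Epi u] (g : X' ⟶ Z) (h : T (kernel (u ≫ g))) : T (kernel g) := by
  have hψ : (kernel.ι (u ≫ g) ≫ u) ≫ g = 0 := by rw [Category.assoc, kernel.condition]
  have hl : pullback.snd (kernel.ι g) u ≫ u ≫ g = 0 := by
    rw [← Category.assoc, ← pullback.condition, Category.assoc, kernel.condition, comp_zero]
  have key : kernel.lift (u ≫ g) (pullback.snd (kernel.ι g) u) hl ≫
      kernel.lift g (kernel.ι (u ≫ g) ≫ u) hψ = pullback.fst (kernel.ι g) u := by
    rw [← cancel_mono (kernel.ι g)]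
    simp [pullback.condition]
  haveI : Epi (kernel.lift (u ≫ g) (pullback.snd (kernel.ι g) u) hl ≫
      kernel.lift g (kernel.ι (u ≫ g) ≫ u) hψ) := by
    rw [key]; infer_instance
  haveI : Epi (kernel.lift g (kernel.ι (u ≫ g) ≫ u) hψ) :=
    epi_of_epi (kernel.lift (u ≫ g) (pullback.snd (kernel.ι g) u) hl) _
  exact torsion_quotient htp h (kernel.lift g (kernel.ι (u ≫ g) ≫ u) hψ)

/-- Kernels of composites of maps with torsion kernels are torsion. -/
lemma torsion_kernel_comp (htp : HereditaryTorsionPair T F) {X Y Y' : C}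
    (f : X ⟶ Y) (v : Y ⟶ Y') (hf : T (kernel f)) (hv : T (kernel v)) :
    T (kernel (f ≫ v)) := by
  have hm : kernel.ι f ≫ f ≫ v = 0 := by rw [← Category.assoc, kernel.condition, zero_comp]
  have hq : (kernel.ι (f ≫ v) ≫ f) ≫ v = 0 := by rw [Category.assoc, kernel.condition]
  set m := kernel.lift (f ≫ v) (kernel.ι f) hm with hmdef
  set q := kernel.lift v (kernel.ι (f ≫ v) ≫ f) hq with hqdef
  have hw : m ≫ q = 0 := by
    rw [← cancel_mono (kernel.ι v)]
    simp [hmdef, hqdef]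
  have hmono : Mono (cokernel.desc m q hw) := by
    refine Preadditive.mono_of_cancel_zero _ (fun {P} a ha => ?_)
    have h1 : pullback.snd a (cokernel.π m) ≫ q = 0 := by
      have : pullback.snd a (cokernel.π m) ≫ cokernel.π m ≫ cokernel.desc m q hw = 0 := by
        rw [← Category.assoc, ← pullback.condition, Category.assoc, ha, comp_zero]
      simpa using this
    have h2 : (pullback.snd a (cokernel.π m) ≫ kernel.ι (f ≫ v)) ≫ f = 0 := by
      have : pullback.snd a (cokernel.π m) ≫ q ≫ kernel.ι v = 0 := by
        rw [← Category.assoc, h1, zero_comp]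
      simpa [hqdef] using this
    have hcm : kernel.lift f (pullback.snd a (cokernel.π m) ≫ kernel.ι (f ≫ v)) h2 ≫ m =
        pullback.snd a (cokernel.π m) := by
      rw [← cancel_mono (kernel.ι (f ≫ v))]
      simp [hmdef]
    have hz : pullback.fst a (cokernel.π m) ≫ a = 0 := by
      rw [pullback.condition, ← hcm, Category.assoc, cokernel.condition, comp_zero]
    exact zero_of_epi_comp (pullback.fst a (cokernel.π m)) hz
  have hcok : T (cokernel m) := htp.hereditary (cokernel.desc m q hw) hmono hv
  exact torsion_ext htp m hf hcok

lemma torsion_cokernel_square (htp : HereditaryTorsionPair T F) {X Y X' Y' : C}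
    (v : Y ⟶ Y') [Epi v] {u : X ⟶ X'} (f : X ⟶ Y) (g : X' ⟶ Y')
    (hsq : u ≫ g = f ≫ v) (hc : T (cokernel f)) : T (cokernel g) := by
  have hw : f ≫ v ≫ cokernel.π g = 0 := by
    rw [← Category.assoc, ← hsq, Category.assoc, cokernel.condition, comp_zero]
  have hfac : cokernel.π f ≫ cokernel.desc f (v ≫ cokernel.π g) hw = v ≫ cokernel.π g :=
    cokernel.π_desc _ _ _
  haveI : Epi (cokernel.π f ≫ cokernel.desc f (v ≫ cokernel.π g) hw) := by
    rw [hfac]; exact epi_comp _ _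
  haveI : Epi (cokernel.desc f (v ≫ cokernel.π g) hw) := epi_of_epi (cokernel.π f) _
  exact torsion_quotient htp hc (cokernel.desc f (v ≫ cokernel.π g) hw)

/-- `Σ`-membership transfers along a commutative square with epi legs with torsion kernels. -/
lemma sigma_square (htp : HereditaryTorsionPair T F) {X Y X' Y' : C}
    (u : X ⟶ X') (v : Y ⟶ Y') [Epi u] [Epi v] (hkv : T (kernel v))
    (f : X ⟶ Y) (g : X' ⟶ Y') (hsq : u ≫ g = f ≫ v) (hf : sigmaClass T f) :
    sigmaClass T g := by
  constructor
  · refine torsion_kernel_of_epi_comp htp u g ?_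
    rw [hsq]
    exact torsion_kernel_comp htp f v hf.1 hkv
  · exact torsion_cokernel_square htp v f g hsq hf.2

/-- Chosen data of torsion subobjects and torsionfree quotients. -/
structure TorsionData (T F : C → Prop) where
  htp : HereditaryTorsionPair T F
  t : C → C
  fq : C → C
  i : ∀ M : C, t M ⟶ M
  p : ∀ M : C, M ⟶ fq M
  w : ∀ M : C, i M ≫ p M = 0
  hT : ∀ M : C, T (t M)
  hF : ∀ M : C, F (fq M)
  hSE : ∀ M : C, (ShortComplex.mk (i M) (p M) (w M)).ShortExact

noncomputable def mkTorsionData (htp : HereditaryTorsionPair T F) : TorsionData T F := by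
  have h := htp.exists_ses
  choose t fq i p w hT hF hSE using h
  exact ⟨htp, t, fq, i, p, w, hT, hF, hSE⟩

namespace TorsionData

variable (d : TorsionData T F)

noncomputable def rMap {M N : C} (g : M ⟶ N) : d.fq M ⟶ d.fq N :=
  (d.hSE M).gIsCokernel.desc (CokernelCofork.ofπ (g ≫ d.p N)
    (by rw [← Category.assoc]
        rw [show d.i M ≫ g = d.i M ≫ g from rfl]
        rw [Category.assoc]
        exact d.htp.hom_zero (d.hT M) (d.hF N) _))

lemma p_rMap {M N : C} (g : M ⟶ N) : d.p M ≫ d.rMap g = g ≫ d.p N := by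
  exact (d.hSE M).gIsCokernel.fac _ WalkingParallelPair.one

noncomputable def r : C ⥤ ObjectProperty.FullSubcategory F where
  obj M := ⟨d.fq M, d.hF M⟩
  map g := ObjectProperty.homMk (d.rMap g)
  map_id M := by
    ext
    haveI := (d.hSE M).epi_g
    have : d.p M ≫ d.rMap (𝟙 M) = d.p M ≫ 𝟙 _ := by
      rw [d.p_rMap, Category.id_comp, Category.comp_id]
    exact (cancel_epi (d.p M)).1 this
  map_comp {M N P} f g := by
    ext
    haveI := (d.hSE M).epi_g
    refine (cancel_epi (d.p M)).1 ?_
    calc d.p M ≫ d.rMap (f ≫ g) = (f ≫ g) ≫ d.p P := d.p_rMap _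
      _ = f ≫ (d.p N ≫ d.rMap g) := by rw [Category.assoc, d.p_rMap]
      _ = (f ≫ d.p N) ≫ d.rMap g := (Category.assoc _ _ _).symm
      _ = (d.p M ≫ d.rMap f) ≫ d.rMap g := by rw [d.p_rMap]
      _ = d.p M ≫ d.rMap f ≫ d.rMap g := Category.assoc _ _ _

/-- The unit natural transformation. -/
noncomputable def η : 𝟭 C ⟶ d.r ⋙ ObjectProperty.ι F where
  app M := d.p M
  naturality M N f := by
    dsimp
    exact (d.p_rMap f).symm

lemma kernel_p_torsion (M : C) : T (kernel (d.p M)) := by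
  haveI := (d.hSE M).mono_f
  have e : kernel (d.p M) ≅ d.t M :=
    IsLimit.conePointUniqueUpToIso (kernelIsKernel (d.p M)) (d.hSE M).fIsKernel
  exact d.htp.replete_T e.symm (d.hT M)

lemma p_sigma (M : C) : sigmaClass T (d.p M) := by
  haveI := (d.hSE M).epi_g
  refine ⟨d.kernel_p_torsion M, ?_⟩
  exact torsion_of_isZero d.htp ((isZero_zero C).of_iso (cokernel.ofEpi (d.p M)))

lemma isIso_p {M : C} (hM : F M) : IsIso (d.p M) := by
  haveI := (d.hSE M).epi_g
  haveI := (d.hSE M).mono_f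
  have hz : IsZero (d.t M) := isZero_torsion_sub d.htp (d.i M) (d.hT M) hM
  have hi : d.i M = 0 := hz.eq_zero_of_src _
  haveI : Mono (d.p M) := by
    refine Preadditive.mono_of_cancel_zero _ (fun {P} g hg => ?_)
    obtain ⟨l, hl⟩ := KernelFork.IsLimit.lift' (d.hSE M).fIsKernel g hg
    dsimp at hl
    rw [← hl, hi, comp_zero]
  exact isIso_of_mono_of_epi _

lemma rMap_sigma {M N : C} (f : M ⟶ N) (hf : sigmaClass T f) :
    sigmaClass T (d.rMap f) := by
  haveI := (d.hSE M).epi_g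
  haveI := (d.hSE N).epi_g
  exact sigma_square d.htp (d.p M) (d.p N) (d.kernel_p_torsion N) f (d.rMap f)
    (d.p_rMap f) hf

/-- On torsionfree objects the reflection is naturally isomorphic to the identity. -/
noncomputable def epsF : ObjectProperty.ι F ⋙ d.r ≅ 𝟭 (ObjectProperty.FullSubcategory F) := by
  refine NatIso.ofComponents (fun X => ?_) (fun {X Y} f => ?_)
  · haveI : IsIso (d.p X.obj) := d.isIso_p X.property
    exact ((ObjectProperty.ι F).preimageIso
      (show (ObjectProperty.ι F).obj X ≅
          (ObjectProperty.ι F).obj ((ObjectProperty.ι F ⋙ d.r).obj X) from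
        @asIso _ _ _ _ (d.p X.obj) this)).symm
  · haveI : IsIso (d.p X.obj) := d.isIso_p X.property
    haveI : IsIso (d.p Y.obj) := d.isIso_p Y.property
    apply (ObjectProperty.ι F).map_injective
    simp only [Functor.map_comp, Iso.symm_hom, Functor.preimageIso_inv, Functor.map_preimage,
      asIso_inv, Functor.id_map]
    show d.rMap f.hom ≫ inv (d.p Y.obj) = inv (d.p X.obj) ≫ f.hom
    rw [IsIso.comp_inv_eq, Category.assoc, IsIso.eq_inv_comp]
    exact d.p_rMap f.hom

end TorsionData

end TorsLoc

/-- Let `(𝒯, ℱ)` be a hereditary torsion pair on an abelian category 𝒜 and `Σ` the class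
of morphisms with torsion kernel and cokernel.  The inclusion `ℱ → 𝒜` induces an
equivalence `ℱ[(Σ ∩ Mor ℱ)⁻¹] ≃ 𝒜[Σ⁻¹]`: the localization of the torsionfree class at
its bimorphisms is equivalent to the Serre quotient `𝒜/𝒯`. -/
theorem torsionfree_localization_equivalence
    {C : Type u} [Category.{v} C] [Abelian C] (T F : C → Prop)
    (htp : HereditaryTorsionPair T F) :
    ∃ (G : (sigmaClassF T F).Localization ⥤ (sigmaClass T).Localization),
      Nonempty ((sigmaClassF T F).Q ⋙ G ≅ ObjectProperty.ι F ⋙ (sigmaClass T).Q) ∧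
      G.IsEquivalence := by
  classical
  let d : TorsLoc.TorsionData T F := TorsLoc.mkTorsionData htp
  have h1 : (sigmaClassF T F).IsInvertedBy
      (ObjectProperty.ι F ⋙ (sigmaClass T).Q) := fun X Y f hf =>
    Localization.inverts (sigmaClass T).Q (sigmaClass T) f.hom ⟨hf.1, hf.2⟩
  have h2 : (sigmaClass T).IsInvertedBy (d.r ⋙ (sigmaClassF T F).Q) := fun X Y f hf =>
    Localization.inverts (sigmaClassF T F).Q (sigmaClassF T F) (d.r.map f)
      (d.rMap_sigma f hf)
  let G := Localization.lift (ObjectProperty.ι F ⋙ (sigmaClass T).Q) h1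
    (sigmaClassF T F).Q
  let H := Localization.lift (d.r ⋙ (sigmaClassF T F).Q) h2 (sigmaClass T).Q
  let eG : (sigmaClassF T F).Q ⋙ G ≅ ObjectProperty.ι F ⋙ (sigmaClass T).Q :=
    Localization.fac _ h1 _
  let eH : (sigmaClass T).Q ⋙ H ≅ d.r ⋙ (sigmaClassF T F).Q :=
    Localization.fac _ h2 _
  -- `G ⋙ H ≅ 𝟭`
  let eGH : (sigmaClassF T F).Q ⋙ (G ⋙ H) ≅
      (ObjectProperty.ι F ⋙ d.r) ⋙ (sigmaClassF T F).Q :=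
    (Functor.associator _ G H).symm ≪≫ Functor.isoWhiskerRight eG H ≪≫
      Functor.associator (ObjectProperty.ι F) (sigmaClass T).Q H ≪≫
      Functor.isoWhiskerLeft (ObjectProperty.ι F) eH ≪≫
      (Functor.associator (ObjectProperty.ι F) d.r (sigmaClassF T F).Q).symm
  letI : Localization.Lifting (sigmaClassF T F).Q (sigmaClassF T F)
      (sigmaClassF T F).Q (G ⋙ H) :=
    ⟨eGH ≪≫ Functor.isoWhiskerRight d.epsF (sigmaClassF T F).Q ≪≫
      Functor.leftUnitor (sigmaClassF T F).Q⟩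
  have iso1 : G ⋙ H ≅ 𝟭 _ := Localization.liftNatIso (sigmaClassF T F).Q (sigmaClassF T F)
    (sigmaClassF T F).Q (sigmaClassF T F).Q (G ⋙ H) (𝟭 _) (Iso.refl _)
  -- `H ⋙ G ≅ 𝟭`
  have etaQ : (sigmaClass T).Q ≅ (d.r ⋙ ObjectProperty.ι F) ⋙ (sigmaClass T).Q := by
    refine NatIso.ofComponents (fun X => ?_) (fun {X Y} f => ?_)
    · haveI : IsIso ((sigmaClass T).Q.map (d.p X)) :=
        Localization.inverts (sigmaClass T).Q (sigmaClass T) (d.p X) (d.p_sigma X)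
      exact @asIso _ _ _ _ ((sigmaClass T).Q.map (d.p X)) this
    · dsimp
      show (sigmaClass T).Q.map f ≫ (sigmaClass T).Q.map (d.p Y) =
        (sigmaClass T).Q.map (d.p X) ≫ (sigmaClass T).Q.map (d.rMap f)
      rw [← Functor.map_comp, ← Functor.map_comp]
      exact congrArg (sigmaClass T).Q.map (d.p_rMap f).symm
  let eHG : (sigmaClass T).Q ⋙ (H ⋙ G) ≅
      (d.r ⋙ ObjectProperty.ι F) ⋙ (sigmaClass T).Q :=
    (Functor.associator _ H G).symm ≪≫ Functor.isoWhiskerRight eH G ≪≫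
      Functor.associator d.r (sigmaClassF T F).Q G ≪≫
      Functor.isoWhiskerLeft d.r eG ≪≫
      (Functor.associator d.r (ObjectProperty.ι F) (sigmaClass T).Q).symm
  letI : Localization.Lifting (sigmaClass T).Q (sigmaClass T)
      (sigmaClass T).Q (H ⋙ G) := ⟨eHG ≪≫ etaQ.symm⟩
  have iso2 : H ⋙ G ≅ 𝟭 _ := Localization.liftNatIso (sigmaClass T).Q (sigmaClass T)
    (sigmaClass T).Q (sigmaClass T).Q (H ⋙ G) (𝟭 _) (Iso.refl _)
  exact ⟨G, ⟨eG⟩, (CategoryTheory.Equivalence.mk G H iso1.symm iso2).isEquivalence_functor⟩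
end

section
/- Let ℰ be a deflation-exact category with admissible kernels in which inflations and deflations (hence weakly admissible morphisms, i.e. composites of a deflation with a finite composition of inflations) are closed under the relevant operations. Then: (1) the pullback of an inflation along any morphism is an inflation; (2) the pullback of an admissible morphism (deflation followed by inflation) along any morphism is admissible. -/
open CategoryTheory CategoryTheory.Limits

universe v u

/-- A morphism is admissible if it factors as a deflation followed by an inflation. -/
def IsAdmissible {C : Type u} [Category.{v} C] [Preadditive C]
    (S : ConflationStructure C) {X Y : C} (f : X ⟶ Y) : Prop :=
  ∃ (I : C) (p : X ⟶ I) (m : I ⟶ Y), S.Deflation p ∧ S.Inflation m ∧ p ≫ m = f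

/-- Inflations are closed under precomposition with isomorphisms. -/
lemma ConflationStructure.Inflation.iso_comp {C : Type u} [Category.{v} C] [Preadditive C]
    {S : ConflationStructure C} {P K T : C} (e : P ≅ K) {k : K ⟶ T}
    (hk : S.Inflation k) : S.Inflation (e.hom ≫ k) := by
  obtain ⟨W, g, hg⟩ := hk
  have := S.iso_closed e (Iso.refl T) (Iso.refl W) hg
  simp only [Iso.refl_hom, Iso.refl_inv, Category.comp_id, Category.id_comp] at this
  exact ⟨W, g, this⟩

/-- Deflations are closed under precomposition with isomorphisms. -/
lemma ConflationStructure.Deflation.iso_comp {C : Type u} [Category.{v} C] [Preadditive C]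
    {S : ConflationStructure C} {P P' Q : C} (e : P ≅ P') {r : P' ⟶ Q}
    (hr : S.Deflation r) : S.Deflation (e.hom ≫ r) := by
  obtain ⟨A, a, ha⟩ := hr
  have := S.iso_closed (Iso.refl A) e.symm (Iso.refl Q) ha
  simp only [Iso.refl_hom, Iso.refl_inv, Iso.symm_hom, Iso.symm_inv,
    Category.comp_id, Category.id_comp] at this
  exact ⟨A, a ≫ e.inv, this⟩

/-- Key lemma: the pullback of an inflation exists and is an inflation
(constructed as a kernel). -/
lemma pullback_inflation {C : Type u} [Category.{v} C] [Preadditive C]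
    (S : ConflationStructure C) (hak : HasAdmissibleKernels S)
    {X Z T : C} (f : X ⟶ Z) (h : T ⟶ Z) (hf : S.Inflation f) :
    ∃ (P : C) (p₁ : P ⟶ X) (p₂ : P ⟶ T), IsPullback p₁ p₂ f h ∧ S.Inflation p₂ := by
  obtain ⟨W, g, hg⟩ := hf
  obtain ⟨hfk⟩ := S.isKernel hg
  have hfg : f ≫ g = 0 := S.comp_zero hg
  obtain ⟨K, k, w, ⟨hkk⟩, hinfl⟩ := hak (h ≫ g)
  have hmonof : Mono f := by
    have := mono_of_isLimit_fork hfk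
    simpa using this
  have hmonok : Mono k := by
    have := mono_of_isLimit_fork hkk
    simpa using this
  obtain ⟨u, hu⟩ := KernelFork.IsLimit.lift' hfk (k ≫ h)
    (by rw [Category.assoc]; exact w)
  simp only [Fork.ι_ofι] at hu
  refine ⟨K, u, k, ?_, hinfl⟩
  refine IsPullback.of_isLimit' ⟨hu⟩ ?_
  have hcond : ∀ s : PullbackCone f h, s.snd ≫ (h ≫ g) = 0 := by
    intro s
    rw [← Category.assoc, ← s.condition, Category.assoc, hfg, comp_zero]
  have hfac : ∀ s : PullbackCone f h,
      (KernelFork.IsLimit.lift' hkk s.snd (hcond s)).1 ≫ k = s.snd := by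
    intro s
    have := (KernelFork.IsLimit.lift' hkk s.snd (hcond s)).2
    simpa using this
  refine PullbackCone.IsLimit.mk hu
    (fun s => (KernelFork.IsLimit.lift' hkk s.snd (hcond s)).1) ?_ ?_ ?_
  · intro s
    rw [← cancel_mono f, Category.assoc, hu, ← Category.assoc, hfac, s.condition]
  · intro s
    exact hfac s
  · intro s m _ hm₂
    rw [← cancel_mono k, hm₂, hfac]

/-- In a deflation-exact category with admissible kernels: (1) pullbacks of inflations
along arbitrary morphisms exist and inflations are stable under pullback; (2) pullbacks
of admissible morphisms exist and admissible morphisms are stable under pullback. -/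
theorem inflations_and_admissibles_stable_under_pullback
    {C : Type u} [Category.{v} C] [Preadditive C]
    (S : ConflationStructure C) (hde : IsDeflationExact S) (hak : HasAdmissibleKernels S) :
    -- (1) inflations
    ((∀ {X Z T : C} (f : X ⟶ Z) (h : T ⟶ Z), S.Inflation f →
        ∃ (P : C) (p₁ : P ⟶ X) (p₂ : P ⟶ T), IsPullback p₁ p₂ f h) ∧
      (∀ {P X Z T : C} {p₁ : P ⟶ X} {p₂ : P ⟶ T} {f : X ⟶ Z} {h : T ⟶ Z},
        IsPullback p₁ p₂ f h → S.Inflation f → S.Inflation p₂)) ∧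
    -- (2) admissible morphisms
    ((∀ {X Z T : C} (f : X ⟶ Z) (h : T ⟶ Z), IsAdmissible S f →
        ∃ (P : C) (p₁ : P ⟶ X) (p₂ : P ⟶ T), IsPullback p₁ p₂ f h) ∧
      (∀ {P X Z T : C} {p₁ : P ⟶ X} {p₂ : P ⟶ T} {f : X ⟶ Z} {h : T ⟶ Z},
        IsPullback p₁ p₂ f h → IsAdmissible S f → IsAdmissible S p₂)) := by
  have H1 : ∀ {X Z T : C} (f : X ⟶ Z) (h : T ⟶ Z), S.Inflation f →
      ∃ (P : C) (p₁ : P ⟶ X) (p₂ : P ⟶ T), IsPullback p₁ p₂ f h ∧ S.Inflation p₂ :=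
    fun f h hf => pullback_inflation S hak f h hf
  constructor
  · constructor
    · intro X Z T f h hf
      obtain ⟨P, p₁, p₂, hpb, _⟩ := H1 f h hf
      exact ⟨P, p₁, p₂, hpb⟩
    · intro P X Z T p₁ p₂ f h hpb hf
      obtain ⟨P', u, k, hpb', hinf⟩ := H1 f h hf
      have he : (hpb.isoIsPullback _ _ hpb').hom ≫ k = p₂ :=
        hpb.isoIsPullback_hom_snd _ _ hpb'
      rw [← he]
      exact hinf.iso_comp _
  · have Hadm : ∀ {X Z T : C} (f : X ⟶ Z) (h : T ⟶ Z), IsAdmissible S f →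
        ∃ (P : C) (p₁ : P ⟶ X) (p₂ : P ⟶ T), IsPullback p₁ p₂ f h ∧ IsAdmissible S p₂ := by
      intro X Z T f h hf
      obtain ⟨I, p, m, hp, hm, hpm⟩ := hf
      obtain ⟨Q, q₁, q₂, hq, hq₂⟩ := H1 m h hm
      obtain ⟨P, r₁, r₂, hr⟩ := hde.R2_exists p q₁ hp
      have hr₂ : S.Deflation r₂ := hde.R2_stable hr hp
      have hpaste : IsPullback r₁ (r₂ ≫ q₂) (p ≫ m) h := hr.paste_vert hq
      rw [hpm] at hpaste
      exact ⟨P, r₁, r₂ ≫ q₂, hpaste, Q, r₂, q₂, hr₂, hq₂, rfl⟩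
    constructor
    · intro X Z T f h hf
      obtain ⟨P, p₁, p₂, hpb, _⟩ := Hadm f h hf
      exact ⟨P, p₁, p₂, hpb⟩
    · intro P X Z T p₁ p₂ f h hpb hf
      obtain ⟨P', u, k, hpb', I, q, n, hq, hn, hqn⟩ := Hadm f h hf
      have he : (hpb.isoIsPullback _ _ hpb').hom ≫ k = p₂ :=
        hpb.isoIsPullback_hom_snd _ _ hpb'
      refine ⟨I, (hpb.isoIsPullback _ _ hpb').hom ≫ q, n, hq.iso_comp _, hn, ?_⟩
      rw [Category.assoc, hqn, he]
end

section
/- Let ℰ be a deflation-exact category satisfying axiom R3+ (if p ∘ i is a deflation then p is a deflation) with kernels, and let g : B → C be a morphism in ℰ such that coker ヨ(g) ∈ mod(ℰ) is effaceable (isomorphic to coker ヨ(f) for a deflation f). Then g is itself a deflation. -/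
open CategoryTheory CategoryTheory.Limits

universe v u v₂ u₂

/-- Axiom R3+: if `p ∘ i` is a deflation, then `p` is a deflation. -/
def AxiomR3Plus {C : Type u} [Category.{v} C] [Preadditive C]
    (S : ConflationStructure C) : Prop :=
  ∀ {A B Z : C} (i : A ⟶ B) (p : B ⟶ Z), S.Deflation (i ≫ p) → S.Deflation p

/-- In an abelian category, a map from a projective whose composite with the cokernel
projection of `g` vanishes lifts through `g`. -/
lemma lift_of_comp_cokernelPi_eq_zero {M : Type u₂} [Category.{v₂} M] [Abelian M]
    {A B Q : M} [Projective Q] (g : A ⟶ B) (w : Q ⟶ B)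
    (h : w ≫ cokernel.π g = 0) : ∃ l : Q ⟶ A, l ≫ g = w := by
  refine ⟨Projective.factorThru (kernel.lift (cokernel.π g) w h)
    (Abelian.factorThruImage g), ?_⟩
  have h1 : Projective.factorThru (kernel.lift (cokernel.π g) w h)
      (Abelian.factorThruImage g) ≫ Abelian.factorThruImage g =
      kernel.lift (cokernel.π g) w h := Projective.factorThru_comp _ _
  have h2 : (Projective.factorThru (kernel.lift (cokernel.π g) w h)
      (Abelian.factorThruImage g) ≫ Abelian.factorThruImage g) ≫ Abelian.image.ι g = w := by
    rw [h1]
    simp [Abelian.image.ι]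
  rw [Category.assoc, Abelian.image.fac] at h2
  exact h2

/-- Let ℰ be a deflation-exact category with kernels satisfying axiom R3+, and
`g : B ⟶ C` a morphism such that `coker ヨ(g) ∈ mod(ℰ)` is effaceable, i.e. isomorphic to
`coker ヨ(f)` for some deflation `f`.  Then `g` is itself a deflation. -/

theorem deflation_of_effaceable_cokernel
    {C : Type u} [Category.{v} C] [Preadditive C] [HasKernels C]
    (S : ConflationStructure C) (hde : IsDeflationExact S) (hR3p : AxiomR3Plus S)
    {M : Type u₂} [Category.{v₂} M] [Abelian M] (Yo : C ⥤ M) (hM : IsModCategory Yo)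
    {B Z : C} (g : B ⟶ Z)
    (heff : ∃ (X' Y' : C) (f : X' ⟶ Y'), S.Deflation f ∧
      Nonempty (cokernel (Yo.map g) ≅ cokernel (Yo.map f))) :
    S.Deflation g := by
  obtain ⟨X', Y', f, hf, ⟨φ⟩⟩ := heff
  haveI := hM.full
  haveI := hM.faithful
  haveI := hM.additive
  haveI := hM.projective_rep Z
  haveI := hM.projective_rep Y'
  haveI := hM.projective_rep X'
  -- γ : Z ⟶ Y'
  set c : Yo.obj Z ⟶ Yo.obj Y' :=
    Projective.factorThru (cokernel.π (Yo.map g) ≫ φ.hom) (cokernel.π (Yo.map f)) with hc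
  have hcπ : c ≫ cokernel.π (Yo.map f) = cokernel.π (Yo.map g) ≫ φ.hom :=
    Projective.factorThru_comp _ _
  set γ : Z ⟶ Y' := Yo.preimage c with hγdef
  have hγ : Yo.map γ ≫ cokernel.π (Yo.map f) = cokernel.π (Yo.map g) ≫ φ.hom := by
    rw [hγdef, Yo.map_preimage]; exact hcπ
  -- γ' : Y' ⟶ Z
  set c' : Yo.obj Y' ⟶ Yo.obj Z :=
    Projective.factorThru (cokernel.π (Yo.map f) ≫ φ.inv) (cokernel.π (Yo.map g)) with hc'
  have hc'π : c' ≫ cokernel.π (Yo.map g) = cokernel.π (Yo.map f) ≫ φ.inv :=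
    Projective.factorThru_comp _ _
  set γ' : Y' ⟶ Z := Yo.preimage c' with hγ'def
  have hγ' : Yo.map γ' ≫ cokernel.π (Yo.map g) = cokernel.π (Yo.map f) ≫ φ.inv := by
    rw [hγ'def, Yo.map_preimage]; exact hc'π
  -- δ : X' ⟶ B with δ ≫ g = f ≫ γ'
  have hδ' : Yo.map (f ≫ γ') ≫ cokernel.π (Yo.map g) = 0 := by
    rw [Yo.map_comp, Category.assoc, hγ', ← Category.assoc, cokernel.condition, zero_comp]
  obtain ⟨d, hd⟩ := lift_of_comp_cokernelPi_eq_zero (Yo.map g) (Yo.map (f ≫ γ')) hδ'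
  set δ : X' ⟶ B := Yo.preimage d with hδdef
  have hδ : δ ≫ g = f ≫ γ' := by
    apply Yo.map_injective
    rw [Yo.map_comp, hδdef, Yo.map_preimage, hd]
  -- σ : Z ⟶ B with σ ≫ g = γ ≫ γ' - 𝟙 Z
  have hσ' : Yo.map (γ ≫ γ' - 𝟙 Z) ≫ cokernel.π (Yo.map g) = 0 := by
    rw [Functor.map_sub, Yo.map_comp, Yo.map_id, Preadditive.sub_comp, Category.id_comp,
      Category.assoc, hγ', ← Category.assoc, hγ, Category.assoc, Iso.hom_inv_id,
      Category.comp_id, sub_self]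
  obtain ⟨s, hs⟩ := lift_of_comp_cokernelPi_eq_zero (Yo.map g) (Yo.map (γ ≫ γ' - 𝟙 Z)) hσ'
  set σ : Z ⟶ B := Yo.preimage s with hσdef
  have hσ : σ ≫ g = γ ≫ γ' - 𝟙 Z := by
    apply Yo.map_injective
    rw [Yo.map_comp, hσdef, Yo.map_preimage, hs]
  -- pull back f along γ
  obtain ⟨P, p₁, p₂, hpb⟩ := hde.R2_exists f γ hf
  have hp₂ : S.Deflation p₂ := hde.R2_stable hpb hf
  -- t ≫ g = p₂ where t = p₁ ≫ δ - p₂ ≫ σ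
  have ht : (p₁ ≫ δ - p₂ ≫ σ) ≫ g = p₂ := by
    rw [Preadditive.sub_comp, Category.assoc, Category.assoc, hδ, hσ, ← Category.assoc,
      hpb.w, Preadditive.comp_sub, Category.assoc, Category.comp_id, sub_sub_cancel]
  refine hR3p (p₁ ≫ δ - p₂ ≫ σ) g ?_
  rw [ht]
  exact hp₂
end
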